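/- arXiv:2108.05697 — 10 statements merged into one kernel-verified Lean document; each statement's English description precedes it below -/
import Mathlib

section
/- Let V be a finite set, p ≥ 1 a real number, y : V → ℝ≥0, and A_∞ ≥ A_1 > 0. Let (D_u)_{u∈V} be a family of random variables on a probability space such that for every u ∈ V: 0 ≤ D_u ≤ A_∞·y_u almost surely, and E[D_u] ≤ A_1·y_u. Then E[(Σ_{u∈V} D_u^p)^{1/p}] ≤ (A_∞^{p−1}·A_1)^{1/p}·(Σ_{u∈V} y_u^p)^{1/p}. -/
open MeasureTheory

/-- Let `V` be a finite set, `p ≥ 1`, `y : V → ℝ` nonnegative, and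
`A∞ ≥ A₁ > 0`. If `(D_u)_{u ∈ V}` is a family of random variables with
`0 ≤ D_u ≤ A∞ y_u` almost surely and `E[D_u] ≤ A₁ y_u` for every `u`, then
`E[(Σ_u D_u^p)^{1/p}] ≤ (A∞^{p-1} A₁)^{1/p} (Σ_u y_u^p)^{1/p}`. -/
theorem stmt3 (V : Type) [Fintype V] (p : ℝ) (hp : 1 ≤ p)
    (y : V → ℝ) (hy : ∀ u, 0 ≤ y u)
    (A1 Ainf : ℝ) (hA1 : 0 < A1) (hA : A1 ≤ Ainf)
    (Ω : Type) [MeasurableSpace Ω] (μ : Measure Ω) [IsProbabilityMeasure μ]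
    (D : V → Ω → ℝ) (hmeas : ∀ u, Measurable (D u))
    (hbd : ∀ u, ∀ᵐ ω ∂μ, 0 ≤ D u ω ∧ D u ω ≤ Ainf * y u)
    (hexp : ∀ u, ∫ ω, D u ω ∂μ ≤ A1 * y u) :
    ∫ ω, (∑ u : V, D u ω ^ p) ^ (1 / p) ∂μ
      ≤ (Ainf ^ (p - 1) * A1) ^ (1 / p) * (∑ u : V, y u ^ p) ^ (1 / p) := by
  have hAinf : 0 < Ainf := hA1.trans_le hA
  have hp0 : 0 < p := lt_of_lt_of_le one_pos hp
  set q : ℝ := 1 / p with hq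
  have hq0 : 0 < q := by positivity
  have hq1 : q ≤ 1 := by rw [hq, div_le_one hp0]; exact hp
  set c : V → ℝ := fun u => Ainf ^ (p - 1) * y u ^ (p - 1) with hc
  have hc0 : ∀ u, 0 ≤ c u := fun u =>
    mul_nonneg (Real.rpow_nonneg hAinf.le _) (Real.rpow_nonneg (hy u) _)
  have hsum0 : (0:ℝ) ≤ ∑ u : V, y u ^ p :=
    Finset.sum_nonneg fun u _ => Real.rpow_nonneg (hy u) p
  set S : ℝ := Ainf ^ (p - 1) * A1 * ∑ u : V, y u ^ p with hSdef
  have hS0 : 0 ≤ S :=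
    mul_nonneg (mul_nonneg (Real.rpow_nonneg hAinf.le _) hA1.le) hsum0
  have hRHS : (Ainf ^ (p - 1) * A1) ^ (1 / p) * (∑ u : V, y u ^ p) ^ (1 / p) = S ^ q := by
    rw [hSdef, Real.mul_rpow (mul_nonneg (Real.rpow_nonneg hAinf.le _) hA1.le) hsum0]
  rw [hRHS]
  have hDint : ∀ u, Integrable (D u) μ := by
    intro u
    refine (integrable_const (Ainf * y u)).mono' (hmeas u).aestronglyMeasurable ?_
    filter_upwards [hbd u] with ω hω
    rw [Real.norm_eq_abs, abs_of_nonneg hω.1]; exact hω.2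
  set f : Ω → ℝ := fun ω => ∑ u : V, D u ω ^ p with hf
  have hfm : Measurable f := Finset.measurable_sum _ fun u _ => (hmeas u).pow_const p
  have hball : ∀ᵐ ω ∂μ, ∀ u, 0 ≤ D u ω ∧ D u ω ≤ Ainf * y u := ae_all_iff.2 hbd
  have hf0 : ∀ᵐ ω ∂μ, 0 ≤ f ω := by
    filter_upwards [hball] with ω hω
    exact Finset.sum_nonneg fun u _ => Real.rpow_nonneg (hω u).1 p
  set C : ℝ := ∑ u : V, (Ainf * y u) ^ p with hC
  have hfC : ∀ᵐ ω ∂μ, f ω ≤ C := by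
    filter_upwards [hball] with ω hω
    exact Finset.sum_le_sum fun u _ => Real.rpow_le_rpow (hω u).1 (hω u).2 hp0.le
  have hfint : Integrable f μ := by
    refine (integrable_const C).mono' hfm.aestronglyMeasurable ?_
    filter_upwards [hf0, hfC] with ω h0 h1
    rw [Real.norm_eq_abs, abs_of_nonneg h0]; exact h1
  have hfqm : Measurable fun ω => f ω ^ q := hfm.pow_const q
  have hfqint : Integrable (fun ω => f ω ^ q) μ := by
    refine (integrable_const (C ^ q)).mono' hfqm.aestronglyMeasurable ?_
    filter_upwards [hf0, hfC] with ω h0 h1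
    rw [Real.norm_eq_abs, abs_of_nonneg (Real.rpow_nonneg h0 q)]
    exact Real.rpow_le_rpow h0 h1 hq0.le
  -- pointwise `f ≤ ∑ c u * D u`
  have hfg : ∀ᵐ ω ∂μ, f ω ≤ ∑ u : V, c u * D u ω := by
    filter_upwards [hball] with ω hω
    refine Finset.sum_le_sum fun u _ => ?_
    rcases eq_or_lt_of_le (hω u).1 with h0 | h0
    · rw [← h0, Real.zero_rpow hp0.ne', mul_zero]
    · have he : D u ω ^ p = D u ω ^ (p - 1) * D u ω := by
        rw [← Real.rpow_add_one h0.ne' (p - 1)]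
        norm_num
      rw [he]
      refine mul_le_mul_of_nonneg_right ?_ (hω u).1
      calc D u ω ^ (p - 1) ≤ (Ainf * y u) ^ (p - 1) :=
            Real.rpow_le_rpow (hω u).1 (hω u).2 (by linarith)
        _ = c u := by rw [hc, Real.mul_rpow hAinf.le (hy u)]
  have hgint : Integrable (fun ω => ∑ u : V, c u * D u ω) μ :=
    integrable_finset_sum _ fun u _ => (hDint u).const_mul (c u)
  have hintf_le : ∫ ω, f ω ∂μ ≤ S := by
    calc ∫ ω, f ω ∂μ ≤ ∫ ω, ∑ u : V, c u * D u ω ∂μ := integral_mono_ae hfint hgint hfg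
      _ = ∑ u : V, c u * ∫ ω, D u ω ∂μ := by
          rw [integral_finset_sum _ fun u _ => (hDint u).const_mul (c u)]
          simp_rw [integral_const_mul]
      _ ≤ ∑ u : V, c u * (A1 * y u) :=
          Finset.sum_le_sum fun u _ => mul_le_mul_of_nonneg_left (hexp u) (hc0 u)
      _ = S := by
          rw [hSdef, Finset.mul_sum]
          refine Finset.sum_congr rfl fun u _ => ?_
          rcases eq_or_lt_of_le (hy u) with h0 | h0
          · simp [hc, ← h0, Real.zero_rpow hp0.ne']
          · have he : y u ^ (p - 1) * y u = y u ^ p := by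
              rw [← Real.rpow_add_one h0.ne' (p - 1)]; norm_num
            rw [hc]
            calc Ainf ^ (p-1) * y u ^ (p-1) * (A1 * y u)
                = Ainf ^ (p-1) * A1 * (y u ^ (p-1) * y u) := by ring
              _ = Ainf ^ (p-1) * A1 * y u ^ p := by rw [he]
  rcases eq_or_lt_of_le hS0 with hS | hS
  · -- degenerate case S = 0
    have hy0 : ∀ u, y u = 0 := by
      intro u
      by_contra hne
      have hyu : 0 < y u := (hy u).lt_of_ne (Ne.symm hne)
      have hterm : 0 < y u ^ p := Real.rpow_pos_of_pos hyu p
      have hsum : 0 < ∑ v : V, y v ^ p :=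
        Finset.sum_pos' (fun v _ => Real.rpow_nonneg (hy v) p)
          ⟨u, Finset.mem_univ u, hterm⟩
      have : 0 < S := by
        have := Real.rpow_pos_of_pos hAinf (p - 1)
        positivity
      rw [← hS] at this; exact lt_irrefl 0 this
    have hD0 : ∀ᵐ ω ∂μ, f ω ^ q = 0 := by
      filter_upwards [hball] with ω hω
      have : f ω = 0 := by
        refine Finset.sum_eq_zero fun u _ => ?_
        have h2 := (hω u).2
        rw [hy0 u, mul_zero] at h2
        have : D u ω = 0 := le_antisymm h2 (hω u).1
        rw [this, Real.zero_rpow hp0.ne']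
      rw [this, Real.zero_rpow hq0.ne']
    rw [integral_congr_ae hD0, integral_zero, ← hS, Real.zero_rpow hq0.ne']
  · -- main case S > 0, tangent line / Young inequality
    have hkey : ∀ᵐ ω ∂μ, f ω ^ q ≤ q * S ^ (q - 1) * f ω + (1 - q) * S ^ q := by
      filter_upwards [hf0] with ω h0
      have hY : f ω ^ q * S ^ (1 - q) ≤ q * f ω + (1 - q) * S :=
        Real.geom_mean_le_arith_mean2_weighted hq0.le (by linarith) h0 hS0 (by ring)
      have hmul := mul_le_mul_of_nonneg_right hY (Real.rpow_nonneg hS0 (q - 1))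
      have hone : S ^ (1 - q) * S ^ (q - 1) = 1 := by
        rw [← Real.rpow_add hS]; norm_num
      have hSq : S * S ^ (q - 1) = S ^ q := by
        rw [mul_comm, ← Real.rpow_add_one hS.ne' (q - 1)]; norm_num
      calc f ω ^ q = f ω ^ q * (S ^ (1 - q) * S ^ (q - 1)) := by rw [hone, mul_one]
        _ = f ω ^ q * S ^ (1 - q) * S ^ (q - 1) := by ring
        _ ≤ (q * f ω + (1 - q) * S) * S ^ (q - 1) := hmul
        _ = q * S ^ (q - 1) * f ω + (1 - q) * (S * S ^ (q - 1)) := by ring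
        _ = q * S ^ (q - 1) * f ω + (1 - q) * S ^ q := by rw [hSq]
    have hcoef : 0 ≤ q * S ^ (q - 1) := mul_nonneg hq0.le (Real.rpow_nonneg hS0 _)
    have hSq : S * S ^ (q - 1) = S ^ q := by
      rw [mul_comm, ← Real.rpow_add_one hS.ne' (q - 1)]; norm_num
    calc ∫ ω, f ω ^ q ∂μ
        ≤ ∫ ω, q * S ^ (q - 1) * f ω + (1 - q) * S ^ q ∂μ :=
          integral_mono_ae hfqint ((hfint.const_mul _).add (integrable_const _)) hkey
      _ = q * S ^ (q - 1) * ∫ ω, f ω ∂μ + (1 - q) * S ^ q := by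
          rw [integral_add (hfint.const_mul _) (integrable_const _), integral_const_mul,
            integral_const]
          simp
      _ ≤ q * S ^ (q - 1) * S + (1 - q) * S ^ q := by
          gcongr
      _ = S ^ q := by
          rw [mul_assoc, mul_comm (S ^ (q - 1)) S, hSq]; ring
end

section
/- Let (X,d) be a finite metric space, q ≥ 1, and r, R > 0 with β = r/R, R_0 = R/D_β, R_1 = R − R_0, and 3R_0 < R_1. Let z ∈ X satisfy |Ball(u,R_0)| ≤ |Ball(z,R_0)| for all u ∈ X. Fix t ∈ (3R_0, R_1] and u ∈ X with 2R_0 ≤ d(z,u) ≤ R, and set P = Ball(z,t). Then |P| ≤ 2·D_β·Y_P, where Y_P = Σ_{v ∈ Ball(u,2R)} (d(u,v)/R)·∨_P(u,v). -/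
open scoped Classical

/-- In a finite metric space, with `β = r/R`, `D_β = 2(q+1)ln(1/β)`,
`R₀ = R/D_β`, `R₁ = R - R₀`, `3R₀ < R₁`, if `z` maximizes `|Ball(·,R₀)|`,
`t ∈ (3R₀, R₁]`, `u` satisfies `2R₀ ≤ d(z,u) ≤ R`, and `P = Ball(z,t)`, then
`|P| ≤ 2 D_β Y_P` where `Y_P = Σ_{v ∈ Ball(u,2R)} (d(u,v)/R)·∨_P(u,v)`. -/
theorem stmt4 (X : Type) [MetricSpace X] [Fintype X]
    (q r R β Dβ R0 R1 : ℝ) (hq : 1 ≤ q) (hr : 0 < r) (hR : 0 < R) (hrR : r < R)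
    (hβ : β = r / R) (hD : Dβ = 2 * (q + 1) * Real.log (1 / β))
    (hR0 : R0 = R / Dβ) (hR1 : R1 = R - R0) (h3 : 3 * R0 < R1)
    (z : X) (hz : ∀ u : X, Set.ncard {v : X | dist u v ≤ R0}
      ≤ Set.ncard {v : X | dist z v ≤ R0})
    (t : ℝ) (ht : t ∈ Set.Ioc (3 * R0) R1)
    (u : X) (hu1 : 2 * R0 ≤ dist z u) (hu2 : dist z u ≤ R) :
    (Set.ncard {v : X | dist z v ≤ t} : ℝ)
      ≤ 2 * Dβ * ∑ v : X, (if dist u v ≤ 2 * R then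
          (dist u v / R) * (if dist z u ≤ t ∨ dist z v ≤ t then 1 else 0) else 0) := by
  have hβ0 : 0 < β := by rw [hβ]; positivity
  have hβ1 : β < 1 := by rw [hβ]; exact (div_lt_one hR).mpr hrR
  have hlog : 0 < Real.log (1 / β) := Real.log_pos (one_lt_one_div hβ0 hβ1)
  have hDβ : 0 < Dβ := by
    have h2 : (0:ℝ) < 2 * (q + 1) := by linarith
    have := mul_pos h2 hlog
    linarith [hD ▸ this]
  have hR0pos : 0 < R0 := hR0 ▸ div_pos hR hDβ
  have hR0t : R0 ≤ t := by linarith [ht.1]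
  have htR1 : t ≤ R1 := ht.2
  -- Finsets
  set f : X → ℝ := fun v => (if dist u v ≤ 2 * R then
          (dist u v / R) * (if dist z u ≤ t ∨ dist z v ≤ t then 1 else 0) else 0) with hf
  set P : Finset X := Finset.univ.filter (fun v => dist z v ≤ t) with hP
  set S : Finset X := Finset.univ.filter (fun v => dist z v ≤ t ∧ R0 ≤ dist u v) with hS
  set T : Finset X := Finset.univ.filter (fun v => dist z v ≤ t ∧ dist u v < R0) with hT
  set Bz : Finset X := Finset.univ.filter (fun v => dist z v ≤ R0) with hBz
  set Bu : Finset X := Finset.univ.filter (fun v => dist u v ≤ R0) with hBu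
  have hncard : Set.ncard {v : X | dist z v ≤ t} = P.card := by
    rw [Set.ncard_eq_toFinset_card']; simp [hP]
  have hzu : Set.ncard {v : X | dist u v ≤ R0} = Bu.card := by
    rw [Set.ncard_eq_toFinset_card']; simp [hBu]
  have hzz : Set.ncard {v : X | dist z v ≤ R0} = Bz.card := by
    rw [Set.ncard_eq_toFinset_card']; simp [hBz]
  have hBuBz : Bu.card ≤ Bz.card := by rw [← hzu, ← hzz]; exact hz u
  -- T ⊆ Bu
  have hTBu : T ⊆ Bu := by
    intro v hv
    simp only [hT, Finset.mem_filter] at hv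
    simp only [hBu, Finset.mem_filter]
    exact ⟨Finset.mem_univ v, le_of_lt hv.2.2⟩
  -- Bz ⊆ S
  have hBzS : Bz ⊆ S := by
    intro v hv
    simp only [hBz, Finset.mem_filter] at hv
    have h1 : dist z v ≤ t := le_trans hv.2 hR0t
    have h2 : R0 ≤ dist u v := by
      have := dist_triangle z v u
      have := dist_comm v u
      have := dist_comm z u
      -- dist z u ≤ dist z v + dist v u
      have htri : dist z u ≤ dist z v + dist u v := by
        calc dist z u ≤ dist z v + dist v u := dist_triangle z v u
        _ = dist z v + dist u v := by rw [dist_comm v u]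
      linarith [hv.2]
    simp only [hS, Finset.mem_filter]
    exact ⟨Finset.mem_univ v, h1, h2⟩
  have hTS : T.card ≤ S.card :=
    le_trans (Finset.card_le_card hTBu) (le_trans hBuBz (Finset.card_le_card hBzS))
  -- P = S ∪ T disjoint
  have hPcard : P.card ≤ S.card + T.card := by
    have : P ⊆ S ∪ T := by
      intro v hv
      simp only [hP, Finset.mem_filter] at hv
      simp only [hS, hT, Finset.mem_union, Finset.mem_filter]
      rcases le_or_gt R0 (dist u v) with h | h
      · exact Or.inl ⟨Finset.mem_univ v, hv.2, h⟩
      · exact Or.inr ⟨Finset.mem_univ v, hv.2, h⟩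
    exact le_trans (Finset.card_le_card this) (Finset.card_union_le S T)
  have hP2S : (P.card : ℝ) ≤ 2 * S.card := by
    have h1 : (T.card : ℝ) ≤ S.card := by exact_mod_cast hTS
    have h2 : (P.card : ℝ) ≤ S.card + T.card := by exact_mod_cast hPcard
    linarith
  -- lower bound on f for v ∈ S
  have hfS : ∀ v ∈ S, R0 / R ≤ f v := by
    intro v hv
    simp only [hS, Finset.mem_filter] at hv
    obtain ⟨-, hvt, hvR0⟩ := hv
    have hcomm : dist u z = dist z u := dist_comm u z
    have hd2R : dist u v ≤ 2 * R := by
      have htri := dist_triangle u z v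
      linarith
    rw [hf]
    simp only [hd2R, if_pos, Or.inr hvt]
    rw [mul_one]
    gcongr
  have hfnonneg : ∀ v : X, 0 ≤ f v := by
    intro v
    rw [hf]
    dsimp only
    split_ifs <;> first | positivity | norm_num
    all_goals positivity
  -- sum bound
  have hsum : (S.card : ℝ) * (R0 / R) ≤ ∑ v : X, f v := by
    calc (S.card : ℝ) * (R0 / R) = S.card • (R0 / R) := by rw [nsmul_eq_mul]
    _ ≤ ∑ v ∈ S, f v := Finset.card_nsmul_le_sum S f (R0/R) hfS
    _ ≤ ∑ v : X, f v := Finset.sum_le_sum_of_subset_of_nonneg (Finset.subset_univ S)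
        (fun v _ _ => hfnonneg v)
  -- combine
  have hDβR0 : Dβ * (R0 / R) = 1 := by
    rw [hR0]; field_simp
  rw [hncard]
  have : 2 * Dβ * ((S.card : ℝ) * (R0 / R)) = 2 * S.card := by
    rw [show 2 * Dβ * ((S.card : ℝ) * (R0 / R)) = 2 * (S.card : ℝ) * (Dβ * (R0/R)) by ring,
      hDβR0, mul_one]
  calc (P.card : ℝ) ≤ 2 * S.card := hP2S
  _ = 2 * Dβ * ((S.card : ℝ) * (R0 / R)) := this.symm
  _ ≤ 2 * Dβ * ∑ v : X, f v := by
      apply mul_le_mul_of_nonneg_left hsum; positivity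
end

section
/- Let (X,d) be a finite metric space, z ∈ X, q ≥ 1, and r, R > 0 with β = r/R, R_0 = R/D_β, R_1 = R − R_0, r < R_0 and 3R_0 < R_1. Set γ = 25r/R_0². Then S_γ ⊆ S; that is, for every t ∈ (3R_0, R_1] such that Ball(z,t) has a γ-light shell of width r, the set P = Ball(z,t) satisfies, for every u ∈ X, Σ_{v ∈ Ball(u,r)} δ_P(u,v) ≤ 25·β·D_β²·Σ_{v ∈ Ball(u,2R)} (d(u,v)/R)·∨_P(u,v). -/
open scoped Classical

open MeasureTheory Set

/-!
If `v ∈ Ball(u, r)` lies on the other side of the boundary of `P = Ball(z, t)` from `u`, the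
triangle inequality puts `u` (and `v`) in the shell `t - r < d(z, ·) ≤ t + r`. So the left-hand
side vanishes unless `u` is in the shell, and is always at most the number of points in the shell,
hence at most `γ ∫₀^{t-r} |Ball(z, x)| dx = γ Σ_v (t - r - d(z, v))⁺` by the layer-cake formula.
For `u` in the shell, `(t - r - d(z, v))⁺ ≤ d(u, v)`, and a nonzero summand has `v ∈ P` and
`d(u, v) ≤ 2t ≤ 2R`; finally `γ R = 25 β D_β²`.
-/

theorem intervalIntegral_indicator_Ici_one {c T : ℝ} (hc : 0 ≤ c) (hT : 0 ≤ T) :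
    ∫ x in (0 : ℝ)..T, (Ici c).indicator 1 x = max (T - c) 0 := by
  have hae : (Ioc 0 T ∩ Ici c : Set ℝ) =ᵐ[volume] (Ioc 0 T ∩ Ioi c : Set ℝ) :=
    (ae_eq_refl _).inter Ioi_ae_eq_Ici.symm
  rw [intervalIntegral.integral_of_le hT, integral_indicator_one measurableSet_Ici,
    measureReal_restrict_apply measurableSet_Ici, inter_comm, measureReal_congr hae,
    Ioc_inter_Ioi, max_eq_right hc, Real.volume_real_Ioc]

theorem monotone_indicator_Ici_one (c : ℝ) : Monotone ((Ici c).indicator (1 : ℝ → ℝ)) := by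
  intro x y hxy
  by_cases hx : c ≤ x
  · simp [indicator_of_mem (mem_Ici.2 hx), indicator_of_mem (mem_Ici.2 (hx.trans hxy))]
  · simp [indicator_of_notMem (notMem_Ici.2 (not_le.1 hx)), indicator_nonneg]

theorem ncard_le_eq_sum_indicator {ι : Type*} [Fintype ι] (f : ι → ℝ) (x : ℝ) :
    ({i | f i ≤ x}.ncard : ℝ) = ∑ i, (Ici (f i)).indicator 1 x := by
  simp only [ncard_eq_toFinset_card', toFinset_ofPred, indicator_apply, mem_Ici, Pi.one_apply,
    Finset.sum_boole]

/-- Layer-cake formula for the counting measure. -/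
theorem intervalIntegral_ncard_le_eq_sum {ι : Type*} [Fintype ι] {f : ι → ℝ} (hf : 0 ≤ f)
    {T : ℝ} (hT : 0 ≤ T) :
    ∫ x in (0 : ℝ)..T, ({i | f i ≤ x}.ncard : ℝ) = ∑ i, max (T - f i) 0 := by
  simp_rw [ncard_le_eq_sum_indicator f]
  rw [intervalIntegral.integral_finsetSum
    fun i _ => (monotone_indicator_Ici_one _).intervalIntegrable]
  exact Finset.sum_congr rfl fun i _ => intervalIntegral_indicator_Ici_one (hf i) hT

section Shell

variable {X : Type*} [PseudoMetricSpace X]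

theorem dist_mem_shell_of_xor {z u v : X} {r t : ℝ} (huv : dist u v ≤ r)
    (hxor : Xor' (dist z u ≤ t) (dist z v ≤ t)) : t - r < dist z u ∧ dist z u ≤ t + r := by
  have h₁ := dist_triangle z u v
  have h₂ := dist_triangle z v u
  rw [dist_comm v u] at h₂
  simp only [Xor'] at hxor
  rcases hxor with ⟨hu, hv⟩ | ⟨hv, hu⟩ <;> constructor <;> linarith

theorem sum_crossing_le_ncard_shell [Fintype X] (z u : X) {r : ℝ} (hr : 0 ≤ r) (t : ℝ) :
    (∑ v : X, if dist u v ≤ r ∧ Xor' (dist z u ≤ t) (dist z v ≤ t) then (1 : ℝ) else 0)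
      ≤ ({v | dist z v ≤ t + r}.ncard : ℝ) - ({v | dist z v ≤ t - r}.ncard : ℝ) := by
  have hinner : {v | dist z v ≤ t - r} ⊆ {v | dist z v ≤ t + r} := fun v hv => by
    simp only [mem_ofPred_eq] at hv ⊢
    linarith
  rw [Finset.sum_boole, ← Nat.cast_sub (ncard_le_ncard hinner), ← ncard_sdiff hinner,
    ← ncard_coe_finset]
  refine Nat.cast_le.2 (ncard_le_ncard fun v hv => ?_)
  simp only [Finset.coe_filter, Finset.mem_univ, true_and, mem_ofPred_eq] at hv
  have := dist_mem_shell_of_xor (dist_comm u v ▸ hv.1) hv.2.symm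
  simp only [mem_sdiff, mem_ofPred_eq, not_le]
  exact ⟨this.2, this.1⟩

theorem posPart_sub_dist_le_ite {z u v : X} {r t R : ℝ} (htR : t ≤ R)
    (hu : t - r < dist z u ∧ dist z u ≤ t + r) :
    max (t - r - dist z v) 0 ≤ if dist u v ≤ 2 * R then
      dist u v * (if dist z u ≤ t ∨ dist z v ≤ t then 1 else 0) else 0 := by
  by_cases hv : dist z v ≤ t - r
  · have h₁ := dist_triangle u z v
    have h₂ := dist_triangle z v u
    rw [dist_comm u z] at h₁
    rw [dist_comm v u] at h₂
    rw [if_pos (by linarith), if_pos (Or.inr (by linarith)), mul_one]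
    exact max_le (by linarith) dist_nonneg
  · rw [max_eq_right (by linarith)]
    split_ifs <;> positivity

end Shell

theorem stmt6_general (X : Type) [MetricSpace X] [Fintype X] (z : X)
    (r R β Dβ R0 R1 γ : ℝ) (hr : 0 < r)
    (hβ : β = r / R)
    (hR0 : R0 = R / Dβ) (hR1 : R1 = R - R0) (hrR0 : r < R0)
    (hγ : γ = 25 * r / R0 ^ 2)
    (t : ℝ) (ht : t ∈ Set.Ioc (3 * R0) R1)
    (hlight : (Set.ncard {v : X | dist z v ≤ t + r} : ℝ)
        - (Set.ncard {v : X | dist z v ≤ t - r} : ℝ)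
      ≤ γ * ∫ x in (0 : ℝ)..(t - r), (Set.ncard {v : X | dist z v ≤ x} : ℝ)) :
    ∀ u : X,
      (∑ v : X, if dist u v ≤ r ∧ Xor' (dist z u ≤ t) (dist z v ≤ t) then (1 : ℝ) else 0)
      ≤ 25 * β * Dβ ^ 2 *
          ∑ v : X, (if dist u v ≤ 2 * R then
            (dist u v / R) * (if dist z u ≤ t ∨ dist z v ≤ t then 1 else 0) else 0) := by
  intro u
  obtain ⟨ht₀, ht₁⟩ := ht
  have hR0pos : 0 < R0 := hr.trans hrR0
  have hR : R ≠ 0 := by rintro rfl; rw [zero_div] at hR0; linarith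
  have hD : Dβ ≠ 0 := by rintro rfl; rw [div_zero] at hR0; linarith
  have hγ₀ : 0 ≤ γ := by rw [hγ]; positivity
  have hconst : 25 * β * Dβ ^ 2 = γ * R := by subst hβ hγ hR0; field_simp
  have hrhs : 25 * β * Dβ ^ 2 * ∑ v : X, (if dist u v ≤ 2 * R then
        (dist u v / R) * (if dist z u ≤ t ∨ dist z v ≤ t then 1 else 0) else 0)
      = γ * ∑ v : X, (if dist u v ≤ 2 * R then
        dist u v * (if dist z u ≤ t ∨ dist z v ≤ t then 1 else 0) else 0) := by
    rw [hconst, mul_assoc, Finset.mul_sum]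
    simp_rw [mul_ite, mul_zero, ← mul_assoc, mul_div_cancel₀ _ hR]
  rw [hrhs]
  by_cases hu : t - r < dist z u ∧ dist z u ≤ t + r
  · calc _ ≤ ({v | dist z v ≤ t + r}.ncard : ℝ) - ({v | dist z v ≤ t - r}.ncard : ℝ) :=
          sum_crossing_le_ncard_shell z u hr.le t
      _ ≤ γ * ∑ v : X, max (t - r - dist z v) 0 := by
          rwa [← intervalIntegral_ncard_le_eq_sum (fun v => dist_nonneg) (by linarith)]
      _ ≤ _ := by
          gcongr with v
          exact posPart_sub_dist_le_ite (by linarith) hu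
  · rw [Finset.sum_eq_zero fun v _ => if_neg fun h => hu (dist_mem_shell_of_xor h.1 h.2)]
    refine mul_nonneg hγ₀ (Finset.sum_nonneg fun v _ => ?_)
    split_ifs <;> positivity

/-- (`S_γ ⊆ S`.) With `β = r/R`, `D_β = 2(q+1)ln(1/β)`, `R₀ = R/D_β`,
`R₁ = R - R₀`, `r < R₀ `, `3R₀ < R₁` and `γ = 25r/R₀²`: for every `t ∈ (3R₀,R₁]` such that
`Ball(z,t)` has a `γ`-light shell of width `r`, the cluster `P = Ball(z,t)` satisfies,
for every `u ∈ X`,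
`Σ_{v ∈ Ball(u,r)} δ_P(u,v) ≤ 25 β D_β² Σ_{v ∈ Ball(u,2R)} (d(u,v)/R)·∨_P(u,v)`. -/
theorem stmt6 (X : Type) [MetricSpace X] [Fintype X] (z : X)
    (q r R β Dβ R0 R1 γ : ℝ) (hq : 1 ≤ q) (hr : 0 < r) (hR : 0 < R) (hrR : r < R)
    (hβ : β = r / R) (hD : Dβ = 2 * (q + 1) * Real.log (1 / β))
    (hR0 : R0 = R / Dβ) (hR1 : R1 = R - R0) (hrR0 : r < R0) (h3 : 3 * R0 < R1)
    (hγ : γ = 25 * r / R0 ^ 2)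
    (t : ℝ) (ht : t ∈ Set.Ioc (3 * R0) R1)
    (hlight : (Set.ncard {v : X | dist z v ≤ t + r} : ℝ)
        - (Set.ncard {v : X | dist z v ≤ t - r} : ℝ)
      ≤ γ * ∫ x in (0 : ℝ)..(t - r), (Set.ncard {v : X | dist z v ≤ x} : ℝ)) :
    ∀ u : X,
      (∑ v : X, if dist u v ≤ r ∧ Xor' (dist z u ≤ t) (dist z v ≤ t) then (1 : ℝ) else 0)
      ≤ 25 * β * Dβ ^ 2 *
          ∑ v : X, (if dist u v ≤ 2 * R then
            (dist u v / R) * (if dist z u ≤ t ∨ dist z v ≤ t then 1 else 0) else 0) :=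
  stmt6_general X z r R β Dβ R0 R1 γ hr hβ hR0 hR1 hrR0 hγ t ht hlight
end

section
/- Let (X,d) be a finite metric space, z ∈ X, q ≥ 1, and r, R > 0 with β = r/R, R_0 = R/D_β, R_1 = R − R_0. Assume r < R_0, β·D_β < 1/(5√2), and R_0 + r < R_1/100, and assume the light-ball condition |Ball(z,R_1)| ≤ ρ_q(β)·|Ball(z,R_0)|, where ρ_q(β) = (1/β)^{q+1}. Set γ = 25r/R_0². Then the Lebesgue measure of S_γ satisfies μ(S_γ) ≥ R/2. -/
/-!
Write `n t = |Ball(z,t)|` and `Φ s = n s + κ ∫₀ˢ n` with `κ = 5/(√2 R₀)`, so that `γ = 2κ²r`.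
If the shell of `Ball(z,t)` is not `γ`-light, then `Φ (t+r) ≥ (1 + 2κr) Φ (t-r)`. For the radii
`t ∈ (3R₀, R₁]` the value `Φ (t-r)` lies between `n R₀` and `(1 + κR₁) n R₁ ≤ (1 + κR₁) ρ n R₀`,
so a chain of heavy radii spaced `2r` apart has fewer than `N` members, where
`(1 + 2κr)^N > (1 + κR₁) ρ`. Covering greedily from the infimum, the heavy radii have measure at
most `2rN`, and since `log ρ = D_β/2` this is at most `R₁ - 3R₀ - R/2 = R₀ (D_β/2 - 4)`.
-/

open MeasureTheory Set Real intervalIntegral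
open scoped ENNReal

theorem Real.volume_le_ofReal_add_volume_of_add_le {A B : Set ℝ} {δ : ℝ} (hA : BddBelow A)
    (hAB : ∀ s ∈ A, ∀ t ∈ A, s + δ ≤ t → t ∈ B) :
    volume A ≤ ENNReal.ofReal δ + volume B := by
  have hcover : A ⊆ Icc (sInf A) (sInf A + δ) ∪ B := by
    intro t ht
    by_cases htδ : t ≤ sInf A + δ
    · exact Or.inl ⟨csInf_le hA ht, htδ⟩
    · obtain ⟨s, hs, hst⟩ := exists_lt_of_csInf_lt ⟨t, ht⟩ (show sInf A < t - δ by linarith)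
      exact Or.inr (hAB s hs t ht (by linarith))
  calc volume A ≤ volume (Icc (sInf A) (sInf A + δ) ∪ B) := measure_mono hcover
    _ ≤ volume (Icc (sInf A) (sInf A + δ)) + volume B := measure_union_le _ _
    _ = ENNReal.ofReal δ + volume B := by rw [Real.volume_Icc, add_sub_cancel_left]

theorem Real.volume_le_of_pow_mul_growth {Φ : ℝ → ℝ} (hΦ : Monotone Φ) {a r : ℝ} (ha : 0 ≤ a)
    (k : ℕ) {B : Set ℝ} {c : ℝ} (hB : BddBelow B)
    (hgrowth : ∀ t ∈ B, a * Φ (t - r) ≤ Φ (t + r))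
    (hbounds : ∀ t ∈ B, c ≤ Φ (t - r) ∧ Φ (t - r) < a ^ k * c) :
    volume B ≤ k * ENNReal.ofReal (2 * r) := by
  induction k generalizing B c with
  | zero =>
    have hB : B = ∅ := eq_empty_of_forall_notMem fun t ht => by
      have := hbounds t ht
      simp only [pow_zero, one_mul] at this
      linarith [this.1, this.2]
    simp [hB]
  | succ k ih =>
    set B' := {t ∈ B | a * c ≤ Φ (t - r)}
    have hsep : ∀ s ∈ B, ∀ t ∈ B, s + 2 * r ≤ t → t ∈ B' := fun s hs t ht hst =>
      ⟨ht, calc a * c ≤ a * Φ (s - r) := mul_le_mul_of_nonneg_left (hbounds s hs).1 ha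
        _ ≤ Φ (s + r) := hgrowth s hs
        _ ≤ Φ (t - r) := hΦ (by linarith)⟩
    have hB' : volume B' ≤ k * ENNReal.ofReal (2 * r) :=
      ih (hB.mono inter_subset_left) (fun t ht => hgrowth t ht.1)
        fun t ht => ⟨ht.2, by simpa [pow_succ, mul_assoc, mul_comm a] using (hbounds t ht.1).2⟩
    calc volume B ≤ ENNReal.ofReal (2 * r) + volume B' :=
          Real.volume_le_ofReal_add_volume_of_add_le hB hsep
      _ ≤ ENNReal.ofReal (2 * r) + k * ENNReal.ofReal (2 * r) := by gcongr
      _ = (k + 1 : ℕ) * ENNReal.ofReal (2 * r) := by push_cast; ring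

theorem Monotone.mul_sub_le_intervalIntegral {n : ℝ → ℝ} (hn : Monotone n) {a b : ℝ}
    (hab : a ≤ b) : (b - a) * n a ≤ ∫ x in a..b, n x := by
  simpa using integral_mono_on (μ := volume) hab intervalIntegrable_const hn.intervalIntegrable
    fun x hx => hn hx.1

theorem Monotone.intervalIntegral_le_mul_sub {n : ℝ → ℝ} (hn : Monotone n) {a b : ℝ}
    (hab : a ≤ b) : ∫ x in a..b, n x ≤ (b - a) * n b := by
  simpa using integral_mono_on (μ := volume) hab hn.intervalIntegrable intervalIntegrable_const
    fun x hx => hn hx.2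

noncomputable def potential (n : ℝ → ℝ) (κ s : ℝ) : ℝ := n s + κ * ∫ x in (0 : ℝ)..s, n x

section potential

variable {n : ℝ → ℝ} {κ : ℝ}

theorem potential_mono (hn : Monotone n) (hn0 : 0 ≤ n) (hκ : 0 ≤ κ) :
    Monotone (potential n κ) := by
  intro a b hab
  have hint : 0 ≤ ∫ x in a..b, n x := integral_nonneg hab fun x _ => hn0 x
  have := integral_interval_sub_left (μ := volume) (a := 0) (b := b) (c := a)
    hn.intervalIntegrable hn.intervalIntegrable
  unfold potential
  nlinarith [hn hab]

theorem le_potential (hn0 : 0 ≤ n) (hκ : 0 ≤ κ) {s : ℝ} (hs : 0 ≤ s) :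
    n s ≤ potential n κ s := by
  have : 0 ≤ ∫ x in (0 : ℝ)..s, n x := integral_nonneg hs fun x _ => hn0 x
  unfold potential
  nlinarith

theorem potential_le (hn : Monotone n) (hκ : 0 ≤ κ) {s : ℝ} (hs : 0 ≤ s) :
    potential n κ s ≤ (1 + κ * s) * n s := by
  have := hn.intervalIntegral_le_mul_sub hs
  unfold potential
  nlinarith

theorem mul_potential_le_of_heavy (hn : Monotone n) (hκ : 0 ≤ κ) {r t : ℝ} (hr : 0 ≤ r)
    (hheavy : 2 * κ ^ 2 * r * ∫ x in (0 : ℝ)..t - r, n x ≤ n (t + r) - n (t - r)) :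
    (1 + 2 * κ * r) * potential n κ (t - r) ≤ potential n κ (t + r) := by
  have hshell : 2 * r * n (t - r) ≤ ∫ x in t - r..t + r, n x := by
    simpa [show t + r - (t - r) = 2 * r by ring] using
      hn.mul_sub_le_intervalIntegral (show t - r ≤ t + r by linarith)
  have := integral_interval_sub_left (μ := volume) (a := 0) (b := t + r) (c := t - r)
    hn.intervalIntegrable hn.intervalIntegrable
  unfold potential
  nlinarith [mul_le_mul_of_nonneg_left hshell hκ]

theorem volume_heavy_shell_le (hn : Monotone n) (hn0 : 0 ≤ n) (hκ : 0 ≤ κ) {r a b : ℝ}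
    (hr : 0 ≤ r) (ha : 0 ≤ a) (N : ℕ) (hN : (1 + κ * b) * n b < (1 + 2 * κ * r) ^ N * n a) :
    volume {t | t - r ∈ Icc a b ∧
        2 * κ ^ 2 * r * ∫ x in (0 : ℝ)..t - r, n x < n (t + r) - n (t - r)}
      ≤ N * ENNReal.ofReal (2 * r) := by
  refine Real.volume_le_of_pow_mul_growth (potential_mono hn hn0 hκ) (by positivity) N (c := n a)
    ⟨a + r, fun t ht => by linarith [ht.1.1]⟩
    (fun t ht => mul_potential_le_of_heavy hn hκ hr ht.2.le) fun t ht => ⟨?_, ?_⟩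
  · exact (hn ht.1.1).trans (le_potential hn0 hκ (ha.trans ht.1.1))
  · calc potential n κ (t - r) ≤ potential n κ b := potential_mono hn hn0 hκ ht.1.2
      _ ≤ (1 + κ * b) * n b := potential_le hn hκ (ha.trans (ht.1.1.trans ht.1.2))
      _ < _ := hN

theorem ofReal_sub_le_volume_light_shell (hn : Monotone n) (hn0 : 0 ≤ n) (hκ : 0 ≤ κ)
    {r a b c : ℝ} (hr : 0 ≤ r) (hc : 0 ≤ c) (hca : c + r ≤ a) (N : ℕ)
    (hN : (1 + κ * b) * n b < (1 + 2 * κ * r) ^ N * n c) :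
    ENNReal.ofReal (b - a - 2 * r * N) ≤ volume {t | t ∈ Ioc a b ∧
        n (t + r) - n (t - r) ≤ 2 * κ ^ 2 * r * ∫ x in (0 : ℝ)..t - r, n x} := by
  set L := {t | t ∈ Ioc a b ∧
    n (t + r) - n (t - r) ≤ 2 * κ ^ 2 * r * ∫ x in (0 : ℝ)..t - r, n x}
  set H := {t | t - r ∈ Icc c b ∧
    2 * κ ^ 2 * r * ∫ x in (0 : ℝ)..t - r, n x < n (t + r) - n (t - r)}
  have hcover : Ioc a b ⊆ L ∪ H := fun t ht => by
    by_cases hlight : n (t + r) - n (t - r) ≤ 2 * κ ^ 2 * r * ∫ x in (0 : ℝ)..t - r, n x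
    · exact Or.inl ⟨ht, hlight⟩
    · exact Or.inr ⟨⟨by linarith [ht.1], by linarith [ht.2]⟩, not_le.1 hlight⟩
  have hvol : ENNReal.ofReal (b - a) ≤ volume L + ENNReal.ofReal (2 * r * N) :=
    calc ENNReal.ofReal (b - a) = volume (Ioc a b) := Real.volume_Ioc.symm
      _ ≤ volume L + volume H := (measure_mono hcover).trans (measure_union_le _ _)
      _ ≤ volume L + N * ENNReal.ofReal (2 * r) := by
        gcongr; exact volume_heavy_shell_le hn hn0 hκ hr hc N hN
      _ = volume L + ENNReal.ofReal (2 * r * N) := by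
        rw [mul_comm (2 * r), ENNReal.ofReal_mul N.cast_nonneg, ENNReal.ofReal_natCast]
  rw [ENNReal.ofReal_sub _ (by positivity)]
  exact tsub_le_iff_right.2 hvol

end potential

theorem exists_nat_lt_pow_le_log_div_log_add_one {a M : ℝ} (ha : 1 < a) (hM : 1 ≤ M) :
    ∃ N : ℕ, M < a ^ N ∧ (N : ℝ) ≤ log M / log a + 1 := by
  have hloga : 0 < log a := log_pos ha
  refine ⟨⌊log M / log a⌋₊ + 1, ?_, ?_⟩
  · have h := Nat.lt_floor_add_one (log M / log a)
    rw [div_lt_iff₀ hloga] at h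
    rw [← log_lt_log_iff (by linarith) (by positivity), log_pow]
    push_cast
    linarith
  · push_cast
    linarith [Nat.floor_le (div_nonneg (log_nonneg hM) hloga.le)]

theorem exists_pow_gt_and_div_mul_le {K D ε : ℝ} (hK : 7 / 2 ≤ K) (hK' : K ≤ 4) (hD : 101 ≤ D)
    (hε : 0 < ε) (hε1 : ε ≤ 1) :
    ∃ N : ℕ, (1 + K * (D - 1)) * exp (D / 2) < (1 + ε) ^ N ∧ ε / K * N ≤ D / 2 - 4 := by
  -- `log y ≤ y - 1` at `y = D / 16` then bounds `log (1 + K (D - 1))` linearly in `D`.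
  have hlin : 1 + K * (D - 1) ≤ 64 * (D / 16) := by nlinarith
  have hM : 1 ≤ (1 + K * (D - 1)) * exp (D / 2) :=
    one_le_mul_of_one_le_of_one_le (by nlinarith) (one_le_exp (by linarith))
  obtain ⟨N, hNM, hN⟩ := exists_nat_lt_pow_le_log_div_log_add_one (by linarith : 1 < 1 + ε) hM
  refine ⟨N, hNM, ?_⟩
  have hlogM : log ((1 + K * (D - 1)) * exp (D / 2)) ≤ 6 * log 2 + D / 16 - 1 + D / 2 := by
    rw [log_mul (by nlinarith) (exp_pos _).ne', log_exp]
    have h64 : log (64 * (D / 16)) = 6 * log 2 + log (D / 16) := by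
      rw [log_mul (by norm_num) (by positivity), show (64 : ℝ) = 2 ^ 6 by norm_num, log_pow]
      norm_num
    linarith [log_le_log (by nlinarith) hlin, log_le_sub_one_of_pos (show 0 < D / 16 by positivity)]
  have hlogε : 2 * ε / 3 ≤ log (1 + ε) :=
    calc 2 * ε / 3 ≤ 2 * ε / (ε + 2) := by gcongr; linarith
      _ ≤ log (1 + ε) := le_log_one_add_of_nonneg hε.le
  have hNlog : N * log (1 + ε) ≤ log ((1 + K * (D - 1)) * exp (D / 2)) + log (1 + ε) := by
    have hN' : (N : ℝ) - 1 ≤ log ((1 + K * (D - 1)) * exp (D / 2)) / log (1 + ε) := by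
      linarith
    have := (le_div_iff₀ (log_pos (by linarith : 1 < 1 + ε))).1 hN'
    linarith
  have hεN : ε * N ≤ 3 / 2 * (6 * log 2 + D / 16 - 1 + D / 2) + 3 / 2 := by
    nlinarith [log_le_sub_one_of_pos (show 0 < 1 + ε by linarith), (N.cast_nonneg : (0 : ℝ) ≤ N)]
  rw [div_mul_eq_mul_div, div_le_iff₀ (by linarith)]
  nlinarith [log_two_lt_d9]

theorem ofReal_half_le_volume_light_shell {n : ℝ → ℝ} (hn : Monotone n) (hn0 : 0 ≤ n)
    {K R0 D r : ℝ} (hK : 7 / 2 ≤ K) (hK' : K ≤ 4) (hR0 : 0 < R0) (hD : 101 ≤ D) (hr : 0 < r)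
    (hrR0 : 2 * K * r ≤ R0) (hnR0 : 0 < n R0)
    (hlight : n (R0 * (D - 1)) ≤ exp (D / 2) * n R0) :
    ENNReal.ofReal (R0 * D / 2) ≤ volume {t | t ∈ Ioc (3 * R0) (R0 * (D - 1)) ∧
        n (t + r) - n (t - r) ≤ 2 * (K / R0) ^ 2 * r * ∫ x in (0 : ℝ)..t - r, n x} := by
  have hε : 2 * (K / R0) * r / K = 2 * r / R0 := by field_simp
  obtain ⟨N, hgrowth, hbudget⟩ := exists_pow_gt_and_div_mul_le hK hK' hD
    (ε := 2 * (K / R0) * r) (by positivity) (by field_simp; linarith)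
  refine (ENNReal.ofReal_le_ofReal ?_).trans (ofReal_sub_le_volume_light_shell hn hn0
    (by positivity) hr.le hR0.le (by nlinarith) N ?_)
  · rw [hε, div_mul_eq_mul_div, div_le_iff₀ hR0] at hbudget
    nlinarith
  · calc (1 + K / R0 * (R0 * (D - 1))) * n (R0 * (D - 1))
        ≤ (1 + K * (D - 1)) * exp (D / 2) * n R0 := by
          rw [← mul_assoc, div_mul_cancel₀ K hR0.ne', mul_assoc]
          gcongr
          nlinarith
      _ < (1 + 2 * (K / R0) * r) ^ N * n R0 := mul_lt_mul_of_pos_right hgrowth hnR0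

theorem stmt7_general (X : Type) [MetricSpace X] [Fintype X] (z : X)
    (q r R β Dβ R0 R1 γ : ℝ) (hr : 0 < r) (hR : 0 < R)
    (hβ : β = r / R) (hD : Dβ = 2 * (q + 1) * Real.log (1 / β))
    (hR0 : R0 = R / Dβ) (hR1 : R1 = R - R0)
    (hrR0 : r < R0) (hβD : β * Dβ < 1 / (5 * Real.sqrt 2)) (hsmall : R0 + r < R1 / 100)
    (hγ : γ = 25 * r / R0 ^ 2)
    (hlightball : (Set.ncard {v : X | dist z v ≤ R1} : ℝ)
      ≤ (1 / β) ^ (q + 1) * (Set.ncard {v : X | dist z v ≤ R0} : ℝ)) :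
    ENNReal.ofReal (R / 2)
      ≤ MeasureTheory.volume {t : ℝ | t ∈ Set.Ioc (3 * R0) R1 ∧
          (Set.ncard {v : X | dist z v ≤ t + r} : ℝ)
              - (Set.ncard {v : X | dist z v ≤ t - r} : ℝ)
            ≤ γ * ∫ x in (0 : ℝ)..(t - r), (Set.ncard {v : X | dist z v ≤ x} : ℝ)} := by
  set n : ℝ → ℝ := fun t => (Set.ncard {v : X | dist z v ≤ t} : ℝ)
  have hn : Monotone n := fun a b hab => Nat.cast_le.2 <|
    Set.ncard_le_ncard (s := {v | dist z v ≤ a}) fun v hv => le_trans hv hab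
  have hR0pos : 0 < R0 := hr.trans hrR0
  have hnR0 : 0 < n R0 := Nat.cast_pos.2 <| (Set.ncard_pos (Set.toFinite _)).2
    ⟨z, show dist z z ≤ R0 by simpa using hR0pos.le⟩
  have hRD : R = R0 * Dβ := by
    have hD0 : Dβ ≠ 0 := by rintro hD0; simp [hD0] at hR0; linarith
    rw [hR0, div_mul_cancel₀ _ hD0]
  have hR1' : R1 = R0 * (Dβ - 1) := by rw [hR1, hRD]; ring
  have hD101 : 101 ≤ Dβ := by nlinarith
  have hρ : (1 / β) ^ (q + 1) = exp (Dβ / 2) := by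
    rw [rpow_def_of_pos (by rw [hβ]; positivity), hD]; ring_nf
  set K := 5 * √2 / 2 with hK
  have hsqrt2 : √2 ^ 2 = 2 := sq_sqrt zero_le_two
  have hrK : 2 * K * r ≤ R0 := by
    have hβD' : β * Dβ = r / R0 := by rw [hβ, hRD]; field_simp
    rw [hβD', div_lt_div_iff₀ hR0pos (by positivity)] at hβD
    rw [hK]
    linarith
  have hγ' : γ = 2 * (K / R0) ^ 2 * r := by rw [hγ, div_pow, div_pow, mul_pow, hsqrt2]; ring
  rw [hρ, hR1'] at hlightball
  rw [hRD, hR1', hγ']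
  exact ofReal_half_le_volume_light_shell hn (fun t => Nat.cast_nonneg _)
    (by nlinarith [sqrt_nonneg 2]) (by nlinarith [sqrt_nonneg 2]) hR0pos hD101 hr hrK hnR0
    hlightball

/-- (`μ(S_γ) ≥ R/2`.) With `β = r/R`, `D_β = 2(q+1)ln(1/β)`,
`R₀ = R/D_β`, `R₁ = R - R₀`, assuming `r < R₀`, `β D_β < 1/(5√2)`, `R₀ + r < R₁/100`
and the light-ball condition `|Ball(z,R₁)| ≤ (1/β)^{q+1} |Ball(z,R₀)|`, the set `S_γ`
of radii `t ∈ (3R₀,R₁]` for which `Ball(z,t)` has a `γ`-light shell of width `r`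
(`γ = 25r/R₀²`) has Lebesgue measure at least `R/2`. -/
theorem stmt7 (X : Type) [MetricSpace X] [Fintype X] (z : X)
    (q r R β Dβ R0 R1 γ : ℝ) (hq : 1 ≤ q) (hr : 0 < r) (hR : 0 < R) (hrR : r < R)
    (hβ : β = r / R) (hD : Dβ = 2 * (q + 1) * Real.log (1 / β))
    (hR0 : R0 = R / Dβ) (hR1 : R1 = R - R0)
    (hrR0 : r < R0) (hβD : β * Dβ < 1 / (5 * Real.sqrt 2)) (hsmall : R0 + r < R1 / 100)
    (hγ : γ = 25 * r / R0 ^ 2)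
    (hlightball : (Set.ncard {v : X | dist z v ≤ R1} : ℝ)
      ≤ (1 / β) ^ (q + 1) * (Set.ncard {v : X | dist z v ≤ R0} : ℝ)) :
    ENNReal.ofReal (R / 2)
      ≤ MeasureTheory.volume {t : ℝ | t ∈ Set.Ioc (3 * R0) R1 ∧
          (Set.ncard {v : X | dist z v ≤ t + r} : ℝ)
              - (Set.ncard {v : X | dist z v ≤ t - r} : ℝ)
            ≤ γ * ∫ x in (0 : ℝ)..(t - r), (Set.ncard {v : X | dist z v ≤ x} : ℝ)} :=
  stmt7_general X z q r R β Dβ R0 R1 γ hr hR hβ hD hR0 hR1 hrR0 hβD hsmall hγ hlightball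
end

section
/- Let (X,d) be a finite metric space, z ∈ X, q ≥ 1, and r, R > 0 with β = r/R, R_0 = R/D_β, R_1 = R − R_0. Assume r < R_0, β·D_β < 1/(5√2), R_0 + r < R_1/100, and the light-ball condition |Ball(z,R_1)| ≤ ρ_q(β)·|Ball(z,R_0)|, where ρ_q(β) = (1/β)^{q+1}. Then the Lebesgue measure of the set S satisfies μ(S) ≥ R/2. -/
open scoped Classical

open MeasureTheory Set

namespace Stmt8Aux

variable {X : Type} [MetricSpace X] [Fintype X]

noncomputable def cnt (z : X) (t : ℝ) : ℝ := ∑ v : X, if dist z v ≤ t then 1 else 0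

noncomputable def pot (z : X) (t : ℝ) : ℝ := ∑ v : X, max (t - dist z v) 0

lemma cnt_nonneg (z : X) (t : ℝ) : 0 ≤ cnt z t :=
  Finset.sum_nonneg fun v _ => by split_ifs <;> norm_num

lemma cnt_mono (z : X) {a b : ℝ} (h : a ≤ b) : cnt z a ≤ cnt z b := by
  refine Finset.sum_le_sum fun v _ => ?_
  split_ifs with h1 h2
  · exact le_rfl
  · exact absurd (h1.trans h) h2
  · norm_num
  · exact le_rfl

lemma pot_nonneg (z : X) (t : ℝ) : 0 ≤ pot z t :=
  Finset.sum_nonneg fun v _ => le_max_right _ _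

lemma pot_mono (z : X) {a b : ℝ} (h : a ≤ b) : pot z a ≤ pot z b :=
  Finset.sum_le_sum fun v _ => max_le_max (by linarith) le_rfl

lemma pot_growth (z : X) {a b : ℝ} (h : a ≤ b) :
    pot z a + (b - a) * cnt z a ≤ pot z b := by
  rw [pot, pot, cnt, Finset.mul_sum, ← Finset.sum_add_distrib]
  refine Finset.sum_le_sum fun v _ => ?_
  split_ifs with hv
  · rw [mul_one, max_eq_left (by linarith)]
    have e : a - dist z v + (b - a) = b - dist z v := by ring
    rw [e]; exact le_max_left _ _
  · rw [mul_zero, add_zero]; exact max_le_max (by linarith) le_rfl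

lemma one_le_cnt (z : X) {t : ℝ} (h : 0 ≤ t) : 1 ≤ cnt z t := by
  rw [cnt]
  have hz : (if dist z z ≤ t then (1:ℝ) else 0) = 1 := by simp [dist_self, h]
  calc (1:ℝ) = (if dist z z ≤ t then (1:ℝ) else 0) := hz.symm
  _ ≤ ∑ v : X, (if dist z v ≤ t then (1:ℝ) else 0) :=
      Finset.single_le_sum (f := fun v : X => if dist z v ≤ t then (1:ℝ) else 0)
        (fun i _ => by by_cases h' : dist z i ≤ t <;> simp [h']) (Finset.mem_univ z)

def badSet (z : X) (r c : ℝ) : Set ℝ :=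
  {t | c * pot z (t - r) ≤ cnt z (t + r) - cnt z (t - r)}

lemma badSet_inf_mem (z : X) {r c lo hi : ℝ} (hc : 0 ≤ c) (S : Set ℝ) (hSne : S.Nonempty)
    (hS : S ⊆ badSet z r c ∩ Icc lo hi) :
    sInf S ∈ badSet z r c ∩ Icc lo hi := by
  have hbdd : BddBelow S := ⟨lo, fun x hx => (hS hx).2.1⟩
  obtain ⟨x₀, hx₀⟩ := hSne
  have hlo : lo ≤ sInf S := le_csInf ⟨x₀, hx₀⟩ (fun x hx => (hS hx).2.1)
  have hhi : sInf S ≤ hi := le_trans (csInf_le hbdd hx₀) (hS hx₀).2.2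
  set t := sInf S with ht
  refine ⟨?_, hlo, hhi⟩
  set F : Finset ℝ := (Finset.univ.image (fun v : X => dist z v)).filter (fun x => t + r < x)
    with hF
  set ε : ℝ := if hFne : F.Nonempty then F.min' hFne - (t + r) else 1 with hε
  have hεpos : 0 < ε := by
    by_cases hFne : F.Nonempty
    · rw [hε, dif_pos hFne]
      have hm : t + r < F.min' hFne := (Finset.mem_filter.mp (F.min'_mem hFne)).2
      linarith
    · rw [hε, dif_neg hFne]; norm_num
  have hcnt_eq : ∀ x : ℝ, x < t + ε → cnt z (x + r) ≤ cnt z (t + r) := by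
    intro x hx
    refine Finset.sum_le_sum fun v _ => ?_
    split_ifs with h1 h2
    · exact le_rfl
    · exfalso
      have hvF : dist z v ∈ F :=
        Finset.mem_filter.mpr ⟨Finset.mem_image_of_mem _ (Finset.mem_univ v), lt_of_not_ge h2⟩
      have hFne : F.Nonempty := ⟨_, hvF⟩
      have hεeq : ε = F.min' hFne - (t + r) := by rw [hε, dif_pos hFne]
      have h3 : F.min' hFne ≤ dist z v := F.min'_le _ hvF
      have h4 : t + r + ε ≤ dist z v := by rw [hεeq] at *; linarith
      linarith
    · norm_num
    · exact le_rfl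
  obtain ⟨x, hxS, hxlt⟩ : ∃ x ∈ S, x < t + ε := by
    by_contra hcon
    push_neg at hcon
    have : t + ε ≤ t := le_csInf ⟨x₀, hx₀⟩ hcon
    linarith
  have htx : t ≤ x := csInf_le hbdd hxS
  have h1 : c * pot z (t - r) ≤ c * pot z (x - r) :=
    mul_le_mul_of_nonneg_left (pot_mono z (by linarith)) hc
  have h2 : c * pot z (x - r) ≤ cnt z (x + r) - cnt z (x - r) := (hS hxS).1
  have h3 : cnt z (x + r) ≤ cnt z (t + r) := hcnt_eq x hxlt
  have h4 : cnt z (t - r) ≤ cnt z (x - r) := cnt_mono z (by linarith)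
  show c * pot z (t - r) ≤ cnt z (t + r) - cnt z (t - r)
  linarith


set_option maxHeartbeats 1000000 in
lemma packing (z : X) (r c K R1 : ℝ) (M : ℕ) (hr : 0 ≤ r) (hc : 0 ≤ c) (hK : 0 < K)
    (hM : K - 1 ≤ c * r * ((M * (M + 1) : ℕ) : ℝ)) :
    ∀ n k m : ℕ, ∀ Gb s₀ : ℝ, k * (M + 1) + (M - m) ≤ n → m ≤ M → 0 < Gb →
      s₀ ∈ badSet z r c → s₀ ≤ R1 →
      Gb * (1 + c * r * ((m * (m - 1) : ℕ) : ℝ)) ≤ pot z (s₀ - r) →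
      c * (m : ℝ) * Gb ≤ cnt z (s₀ - r) →
      pot z (R1 - r) < Gb * K ^ (k + 1) →
      volume (badSet z r c ∩ Icc s₀ R1) ≤
        ENNReal.ofReal (2 * r * (((k * (M + 1) + (M - m) : ℕ) : ℝ) + 1)) := by
  intro n
  induction n using Nat.strong_induction_on with
  | _ n ih =>
  intro k m Gb s₀ hn hm hGb hs₀bad hs₀R1 hpot hcnt hcap
  by_cases hne : (badSet z r c ∩ Icc (s₀ + 2 * r) R1).Nonempty
  · set s' := sInf (badSet z r c ∩ Icc (s₀ + 2 * r) R1) with hs'def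
    have hs'mem := badSet_inf_mem z hc _ hne (fun x hx => hx)
    obtain ⟨hs'bad, hs'lo, hs'hi⟩ := hs'mem
    have hsub : badSet z r c ∩ Icc s₀ R1 ⊆
        Ico s₀ (s₀ + 2 * r) ∪ (badSet z r c ∩ Icc s' R1) := by
      rintro x ⟨hxbad, hx1, hx2⟩
      by_cases hx3 : x < s₀ + 2 * r
      · exact Or.inl ⟨hx1, hx3⟩
      · right
        refine ⟨hxbad, ?_, hx2⟩
        exact csInf_le ⟨s₀ + 2 * r, fun y hy => hy.2.1⟩ ⟨hxbad, le_of_not_gt hx3, hx2⟩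
    have hA : cnt z (s₀ - r) + c * pot z (s₀ - r) ≤ cnt z (s' - r) := by
      have h1 : c * pot z (s₀ - r) ≤ cnt z (s₀ + r) - cnt z (s₀ - r) := hs₀bad
      have h2 : cnt z (s₀ + r) ≤ cnt z (s' - r) := cnt_mono z (by linarith)
      linarith
    have hmm0 : (0:ℝ) ≤ c * r * ((m * (m - 1) : ℕ) : ℝ) := by positivity
    have hpotGb : Gb ≤ pot z (s₀ - r) := by nlinarith
    have hcGb : c * Gb ≤ c * pot z (s₀ - r) := mul_le_mul_of_nonneg_left hpotGb hc
    have hcnt' : c * ((m : ℝ) + 1) * Gb ≤ cnt z (s' - r) := by nlinarith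
    have hpotS' : pot z (s₀ - r) + 2 * r * (c * (m : ℝ) * Gb) ≤ pot z (s' - r) := by
      have hg := pot_growth z (show s₀ - r ≤ s' - r by linarith)
      have hge : 2 * r * (c * (m : ℝ) * Gb) ≤ (s' - r - (s₀ - r)) * cnt z (s₀ - r) := by
        have h1 : 2 * r ≤ s' - r - (s₀ - r) := by linarith
        have h2 : (0:ℝ) ≤ c * (m : ℝ) * Gb := by positivity
        nlinarith [cnt_nonneg z (s₀ - r)]
      linarith
    have hcastm : ((m * (m + 1) : ℕ) : ℝ) = ((m * (m - 1) : ℕ) : ℝ) + 2 * (m : ℝ) := by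
      cases m with
      | zero => simp
      | succ p => push_cast [Nat.succ_sub_one]; ring
    have hpotnew : Gb * (1 + c * r * ((m * (m + 1) : ℕ) : ℝ)) ≤ pot z (s' - r) := by
      rw [hcastm]; nlinarith
    by_cases hlev : pot z (s' - r) < K * Gb
    · -- stay in level
      have hm1 : m + 1 ≤ M := by
        by_contra hcon
        have hmM : M ≤ m := by omega
        have h1 : ((M * (M + 1) : ℕ) : ℝ) ≤ ((m * (m + 1) : ℕ) : ℝ) := by
          exact_mod_cast Nat.mul_le_mul hmM (by omega)
        have h2 : K - 1 ≤ c * r * ((m * (m + 1) : ℕ) : ℝ) :=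
          hM.trans (mul_le_mul_of_nonneg_left h1 (by positivity))
        have h3 := mul_le_mul_of_nonneg_left h2 hGb.le
        nlinarith
      have hpot'' : Gb * (1 + c * r * (((m + 1) * ((m + 1) - 1) : ℕ) : ℝ)) ≤ pot z (s' - r) := by
        have e : ((m + 1) * ((m + 1) - 1) : ℕ) = m * (m + 1) := by
          simp [Nat.succ_sub_one, Nat.mul_comm]
        rw [e]; exact hpotnew
      have hcnt'' : c * ((m + 1 : ℕ) : ℝ) * Gb ≤ cnt z (s' - r) := by push_cast; exact hcnt'
      have hcount : k * (M + 1) + (M - (m + 1)) < n := by omega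
      have IH := ih _ hcount k (m + 1) Gb s' le_rfl hm1 hGb hs'bad hs'hi hpot'' hcnt'' hcap
      have hcnteq : (k * (M + 1) + (M - m) : ℕ) = (k * (M + 1) + (M - (m + 1)) : ℕ) + 1 := by
        omega
      calc volume (badSet z r c ∩ Icc s₀ R1)
          ≤ volume (Ico s₀ (s₀ + 2 * r)) + volume (badSet z r c ∩ Icc s' R1) :=
            le_trans (measure_mono hsub) (measure_union_le _ _)
        _ ≤ ENNReal.ofReal (2 * r) +
            ENNReal.ofReal (2 * r * (((k * (M + 1) + (M - (m + 1)) : ℕ) : ℝ) + 1)) := by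
            rw [Real.volume_Ico]
            have e : s₀ + 2 * r - s₀ = 2 * r := by ring
            rw [e]
            exact add_le_add le_rfl IH
        _ = ENNReal.ofReal (2 * r * (((k * (M + 1) + (M - m) : ℕ) : ℝ) + 1)) := by
            rw [← ENNReal.ofReal_add (by linarith) (mul_nonneg (by linarith) (by positivity))]
            congr 1
            rw [hcnteq]
            push_cast
            ring
    · -- level up
      push_neg at hlev
      have hk1 : 1 ≤ k := by
        by_contra hk0
        have hk0' : k = 0 := by omega
        rw [hk0'] at hcap
        have h1 : pot z (s' - r) ≤ pot z (R1 - r) := pot_mono z (by linarith)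
        have h2 : Gb * K ^ (0 + 1) = K * Gb := by ring
        rw [h2] at hcap
        linarith
      obtain ⟨kk, rfl⟩ : ∃ kk, k = kk + 1 := ⟨k - 1, by omega⟩
      have hpot'' : (K * Gb) * (1 + c * r * ((0 * (0 - 1) : ℕ) : ℝ)) ≤ pot z (s' - r) := by
        simp only [Nat.zero_mul, Nat.cast_zero, mul_zero, add_zero, mul_one]
        exact hlev
      have hcnt'' : c * ((0 : ℕ) : ℝ) * (K * Gb) ≤ cnt z (s' - r) := by
        simp only [Nat.cast_zero, mul_zero, zero_mul]
        exact cnt_nonneg z _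
      have hcap'' : pot z (R1 - r) < (K * Gb) * K ^ (kk + 1) := by
        have e : (K * Gb) * K ^ (kk + 1) = Gb * K ^ (kk + 1 + 1) := by ring
        rw [e]; exact hcap
      have haux : (kk + 1) * (M + 1) = kk * (M + 1) + (M + 1) := by ring
      have hn2 : kk * (M + 1) + (M + 1) + (M - m) ≤ n := by
        have hn3 := hn
        rw [haux] at hn3
        omega
      have hcount : kk * (M + 1) + (M - 0) < n := by omega
      have IH := ih _ hcount kk 0 (K * Gb) s' le_rfl (Nat.zero_le _)
        (by positivity) hs'bad hs'hi hpot'' hcnt'' hcap''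
      calc volume (badSet z r c ∩ Icc s₀ R1)
          ≤ volume (Ico s₀ (s₀ + 2 * r)) + volume (badSet z r c ∩ Icc s' R1) :=
            le_trans (measure_mono hsub) (measure_union_le _ _)
        _ ≤ ENNReal.ofReal (2 * r) +
            ENNReal.ofReal (2 * r * (((kk * (M + 1) + (M - 0) : ℕ) : ℝ) + 1)) := by
            rw [Real.volume_Ico]
            have e : s₀ + 2 * r - s₀ = 2 * r := by ring
            rw [e]
            exact add_le_add le_rfl IH
        _ ≤ ENNReal.ofReal (2 * r * ((((kk + 1) * (M + 1) + (M - m) : ℕ) : ℝ) + 1)) := by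
            rw [← ENNReal.ofReal_add (by linarith) (mul_nonneg (by linarith) (by positivity))]
            apply ENNReal.ofReal_le_ofReal
            have hle : (kk * (M + 1) + (M - 0) : ℕ) + 1 ≤ (kk + 1) * (M + 1) + (M - m) := by
              rw [haux]; omega
            have hle' : ((kk * (M + 1) + (M - 0) : ℕ) : ℝ) + 1 ≤
                (((kk + 1) * (M + 1) + (M - m) : ℕ) : ℝ) := by exact_mod_cast hle
            nlinarith [hr, hle']
  · have hsub : badSet z r c ∩ Icc s₀ R1 ⊆ Ico s₀ (s₀ + 2 * r) := by
      rintro x ⟨hxbad, hx1, hx2⟩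
      by_cases hx3 : x < s₀ + 2 * r
      · exact ⟨hx1, hx3⟩
      · exact absurd (⟨x, hxbad, le_of_not_gt hx3, hx2⟩ : (badSet z r c ∩ Icc (s₀ + 2 * r) R1).Nonempty) hne
    calc volume (badSet z r c ∩ Icc s₀ R1) ≤ volume (Ico s₀ (s₀ + 2 * r)) := measure_mono hsub
      _ = ENNReal.ofReal (2 * r) := by rw [Real.volume_Ico]; congr 1; ring
      _ ≤ _ := by
          apply ENNReal.ofReal_le_ofReal
          have h0 : (0:ℝ) ≤ ((k * (M + 1) + (M - m) : ℕ) : ℝ) := Nat.cast_nonneg _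
          nlinarith [mul_nonneg hr h0]


lemma violation_mem_badSet (z u : X) {r c R R1 s : ℝ} (hr : 0 < r) (hR : 0 < R)
    (hsR1 : s ≤ R1) (hR1R : R1 ≤ R) (hcpos : 0 < c)
    (hvio : ¬ ((∑ v : X, if dist u v ≤ r ∧ Xor' (dist z u ≤ s) (dist z v ≤ s)
          then (1 : ℝ) else 0)
        ≤ c * R * ∑ v : X, (if dist u v ≤ 2 * R then
            (dist u v / R) * (if dist z u ≤ s ∨ dist z v ≤ s then 1 else 0) else 0))) :
    s ∈ badSet z r c := by
  push_neg at hvio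
  set LHS := ∑ v : X, (if dist u v ≤ r ∧ Xor' (dist z u ≤ s) (dist z v ≤ s)
      then (1 : ℝ) else 0) with hLHS
  set RHS := ∑ v : X, (if dist u v ≤ 2 * R then
      (dist u v / R) * (if dist z u ≤ s ∨ dist z v ≤ s then 1 else 0) else 0) with hRHS
  have hRHS0 : 0 ≤ RHS := by
    rw [hRHS]
    refine Finset.sum_nonneg fun v _ => ?_
    split_ifs <;> positivity
  have hLHSpos : 0 < LHS := lt_of_le_of_lt (by positivity) hvio
  obtain ⟨v₀, -, hv₀⟩ := Finset.exists_ne_zero_of_sum_ne_zero (ne_of_gt hLHSpos)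
  have hv₀' : dist u v₀ ≤ r ∧ Xor' (dist z u ≤ s) (dist z v₀ ≤ s) := by
    by_contra hcon
    rw [if_neg hcon] at hv₀
    exact hv₀ rfl
  obtain ⟨hduv₀, hxor⟩ := hv₀'
  have ha : s - r < dist z u ∧ dist z u ≤ s + r := by
    rcases hxor with ⟨h1, h2⟩ | ⟨h1, h2⟩
    · push_neg at h2
      have h3 : dist z v₀ ≤ dist z u + dist u v₀ := dist_triangle z u v₀
      constructor
      · linarith
      · linarith [dist_nonneg (x := u) (y := v₀)]
    · push_neg at h2
      have h3 : dist z u ≤ dist z v₀ + dist u v₀ := by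
        rw [dist_comm u v₀]; exact dist_triangle z v₀ u
      constructor
      · linarith [dist_nonneg (x := u) (y := v₀)]
      · linarith
  have key1 : cnt z (s - r) + LHS ≤ cnt z (s + r) := by
    rw [cnt, cnt, hLHS, ← Finset.sum_add_distrib]
    refine Finset.sum_le_sum fun v _ => ?_
    by_cases hv : dist u v ≤ r ∧ Xor' (dist z u ≤ s) (dist z v ≤ s)
    · rw [if_pos hv]
      obtain ⟨hd, hx⟩ := hv
      have hwin : s - r < dist z v ∧ dist z v ≤ s + r := by
        rcases hx with ⟨h1, h2⟩ | ⟨h1, h2⟩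
        · push_neg at h2
          have h3 : dist z v ≤ dist z u + dist u v := dist_triangle z u v
          exact ⟨by linarith, by linarith⟩
        · push_neg at h2
          have h3 : dist z u ≤ dist z v + dist u v := by
            rw [dist_comm u v]; exact dist_triangle z v u
          exact ⟨by linarith, by linarith⟩
      rw [if_neg (by linarith [hwin.1] : ¬ dist z v ≤ s - r), if_pos hwin.2]
      norm_num
    · rw [if_neg hv, add_zero]
      split_ifs with h1 h2
      · exact le_rfl
      · exact absurd (by linarith : dist z v ≤ s + r) h2
      · norm_num
      · exact le_rfl
  have key2 : pot z (s - r) ≤ R * RHS := by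
    rw [pot, hRHS, Finset.mul_sum]
    refine Finset.sum_le_sum fun v _ => ?_
    by_cases hv : dist z v < s - r
    · have hd1 : dist z u ≤ dist z v + dist u v := by
        rw [dist_comm u v]; exact dist_triangle z v u
      have hd2 : dist u v ≤ dist u z + dist z v := dist_triangle u z v
      have hd3 : dist u z = dist z u := dist_comm u z
      have hduv2R : dist u v ≤ 2 * R := by
        rw [hd3] at hd2
        have : dist u v ≤ (s + r) + (s - r) := by linarith [ha.2]
        linarith
      have hor : dist z u ≤ s ∨ dist z v ≤ s := Or.inr (by linarith)
      rw [if_pos hduv2R, if_pos hor, mul_one, max_eq_left (by linarith)]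
      have : s - r - dist z v ≤ dist u v := by linarith [ha.1]
      calc s - r - dist z v ≤ dist u v := this
        _ = R * (dist u v / R) := by field_simp
    · push_neg at hv
      have hmax : max (s - r - dist z v) 0 = 0 := max_eq_right (by linarith)
      rw [hmax]
      split_ifs <;> positivity
  show c * pot z (s - r) ≤ cnt z (s + r) - cnt z (s - r)
  have h5 : c * pot z (s - r) ≤ c * (R * RHS) := mul_le_mul_of_nonneg_left key2 hcpos.le
  have h6 : c * (R * RHS) = c * R * RHS := by ring
  linarith [hvio, key1, h5.trans_eq h6]

end Stmt8Aux


set_option maxHeartbeats 1000000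

/-- (`μ(S) ≥ R/2`.) With `β = r/R`, `D_β = 2(q+1)ln(1/β)`, `R₀ = R/D_β`,
`R₁ = R - R₀`, assuming `r < R₀`, `β D_β < 1/(5√2)`, `R₀ + r < R₁/100` and the light-ball
condition `|Ball(z,R₁)| ≤ (1/β)^{q+1} |Ball(z,R₀)|`, the set `S` of radii `s ∈ (3R₀,R₁]`
such that `P = Ball(z,s)` satisfies property (c) (with constant 25) for every `u ∈ X`
has Lebesgue measure at least `R/2`. -/
theorem stmt8 (X : Type) [MetricSpace X] [Fintype X] (z : X)
    (q r R β Dβ R0 R1 : ℝ) (hq : 1 ≤ q) (hr : 0 < r) (hR : 0 < R) (hrR : r < R)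
    (hβ : β = r / R) (hD : Dβ = 2 * (q + 1) * Real.log (1 / β))
    (hR0 : R0 = R / Dβ) (hR1 : R1 = R - R0)
    (hrR0 : r < R0) (hβD : β * Dβ < 1 / (5 * Real.sqrt 2)) (hsmall : R0 + r < R1 / 100)
    (hlightball : (Set.ncard {v : X | dist z v ≤ R1} : ℝ)
      ≤ (1 / β) ^ (q + 1) * (Set.ncard {v : X | dist z v ≤ R0} : ℝ)) :
    ENNReal.ofReal (R / 2)
      ≤ MeasureTheory.volume {s : ℝ | s ∈ Set.Ioc (3 * R0) R1 ∧
          ∀ u : X,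
            (∑ v : X, if dist u v ≤ r ∧ Xor' (dist z u ≤ s) (dist z v ≤ s)
                then (1 : ℝ) else 0)
            ≤ 25 * β * Dβ ^ 2 *
                ∑ v : X, (if dist u v ≤ 2 * R then
                  (dist u v / R) * (if dist z u ≤ s ∨ dist z v ≤ s then 1 else 0)
                  else 0)} := by
  classical
  have hβpos : 0 < β := by rw [hβ]; positivity
  have hβlt1 : β < 1 := by rw [hβ]; exact (div_lt_one hR).mpr hrR
  have hlogβ : 0 < Real.log (1 / β) := Real.log_pos (one_lt_one_div hβpos hβlt1)
  have hq1 : (0:ℝ) < q + 1 := by linarith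
  have hDpos : 0 < Dβ := by
    rw [hD]; exact mul_pos (by linarith) hlogβ
  have hR0pos : 0 < R0 := by rw [hR0]; positivity
  have hR1R : R1 ≤ R := by rw [hR1]; linarith
  have hRD : R = Dβ * R0 := by rw [hR0]; field_simp
  have h101 : 101 * R0 < R := by rw [hR1] at hsmall; linarith
  have hD101 : 101 < Dβ := by
    have h2 : 101 * R0 < Dβ * R0 := by rw [← hRD]; exact h101
    exact lt_of_mul_lt_mul_right h2 hR0pos.le
  have hrβR : r = β * R := by rw [hβ]; field_simp
  set c : ℝ := 25 * β * Dβ ^ 2 / R with hc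
  have hcpos : 0 < c := by rw [hc]; positivity
  have hcR : c * R = 25 * β * Dβ ^ 2 := by rw [hc]; field_simp
  set K : ℝ := Real.exp (5 / 2) with hKdef
  have hKpos : 0 < K := Real.exp_pos _
  have hK1 : 1 ≤ K := Real.one_le_exp (by norm_num)
  have hcr : 0 < c * r := mul_pos hcpos hr
  set M : ℕ := ⌈Real.sqrt ((K - 1) / (c * r))⌉₊ with hMdef
  have hKcr0 : 0 ≤ (K - 1) / (c * r) := div_nonneg (by linarith) hcr.le
  have hMlb : Real.sqrt ((K - 1) / (c * r)) ≤ (M : ℝ) := Nat.le_ceil _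
  have hMsq : (K - 1) / (c * r) ≤ (M : ℝ) * (M : ℝ) := by
    have h1 := Real.sq_sqrt hKcr0
    have h2 : Real.sqrt ((K - 1) / (c * r)) ^ 2 ≤ (M:ℝ) ^ 2 :=
      pow_le_pow_left₀ (Real.sqrt_nonneg _) hMlb 2
    calc (K - 1) / (c * r) = Real.sqrt ((K - 1) / (c * r)) ^ 2 := h1.symm
      _ ≤ (M:ℝ) ^ 2 := h2
      _ = (M:ℝ) * (M:ℝ) := sq (M:ℝ)
  have hMprop : K - 1 ≤ c * r * ((M * (M + 1) : ℕ) : ℝ) := by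
    rw [div_le_iff₀ hcr] at hMsq
    have h3 : ((M * (M + 1) : ℕ) : ℝ) = (M:ℝ) * ((M:ℝ) + 1) := by push_cast; ring
    rw [h3]
    have h4 : (M:ℝ) * (M:ℝ) ≤ (M:ℝ) * ((M:ℝ) + 1) :=
      mul_le_mul_of_nonneg_left (by linarith only []) (Nat.cast_nonneg M)
    calc K - 1 ≤ (M:ℝ) * (M:ℝ) * (c * r) := hMsq
      _ ≤ (M:ℝ) * ((M:ℝ) + 1) * (c * r) := mul_le_mul_of_nonneg_right h4 hcr.le
      _ = c * r * ((M:ℝ) * ((M:ℝ) + 1)) := by ring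
  have hMub : (M : ℝ) ≤ Real.sqrt ((K - 1) / (c * r)) + 1 :=
    (Nat.ceil_lt_add_one (Real.sqrt_nonneg _)).le
  have hee : Real.exp (5 / 4) ^ (2:ℕ) = K := by
    rw [hKdef, ← Real.exp_nat_mul]; norm_num
  have hsqrtKb : 2 * r * Real.sqrt ((K - 1) / (c * r))
      ≤ 2 * Real.exp (5 / 4) * (R0 / 5) := by
    have h1 : 2 * r * Real.sqrt ((K - 1) / (c * r))
        = Real.sqrt ((2*r)^2 * ((K - 1) / (c * r))) := by
      rw [Real.sqrt_mul (by positivity), Real.sqrt_sq (by linarith)]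
    have e1 : (2*r)^2 * ((K - 1) / (c * r)) = (K - 1) * (4 * R0^2 / 25) := by
      rw [hc, hrβR, hRD]; field_simp; ring
    have e2 : (2 * Real.exp (5 / 4) * (R0 / 5))^2 = K * (4 * R0^2 / 25) := by
      rw [← hee]; ring
    have h2 : (2*r)^2 * ((K - 1) / (c * r)) ≤ (2 * Real.exp (5 / 4) * (R0 / 5))^2 := by
      rw [e1, e2]
      have h4 : (0:ℝ) ≤ 4 * R0^2 / 25 := by positivity
      exact mul_le_mul_of_nonneg_right (by linarith only []) h4
    calc 2 * r * Real.sqrt ((K - 1) / (c * r)) = _ := h1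
      _ ≤ Real.sqrt ((2 * Real.exp (5 / 4) * (R0 / 5))^2) := Real.sqrt_le_sqrt h2
      _ = 2 * Real.exp (5 / 4) * (R0 / 5) := Real.sqrt_sq (by positivity)
  have hsqrt2 : (1.4142135 : ℝ) < Real.sqrt 2 := by
    have h1 : Real.sqrt ((1.4142135:ℝ)^2) < Real.sqrt 2 :=
      Real.sqrt_lt_sqrt (by positivity) (by norm_num)
    rwa [Real.sqrt_sq (by norm_num)] at h1
  have h4r : 4 * r ≤ 0.5656856 * R0 := by
    have h2 : 1 / (5 * Real.sqrt 2) ≤ 0.1414214 := by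
      rw [div_le_iff₀ (by positivity)]
      linarith [hsqrt2]
    have h3 : 4 * r = 4 * (β * Dβ) * R0 := by rw [hrβR, hRD]; ring
    rw [h3]
    have h5 : β * Dβ ≤ 0.1414214 := le_trans hβD.le h2
    have h6 : 4 * (β * Dβ) ≤ 4 * (0.1414214:ℝ) := by linarith only [h5]
    calc 4 * (β * Dβ) * R0 ≤ 4 * (0.1414214:ℝ) * R0 :=
        mul_le_mul_of_nonneg_right h6 hR0pos.le
      _ ≤ 0.5656856 * R0 := by linarith only [hR0pos]
  have hexp54 : Real.exp (5 / 4) ≤ 3.4974 := by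
    have h1 : Real.exp (5/4 : ℝ) = Real.exp 1 * Real.exp (1/4 : ℝ) := by
      rw [← Real.exp_add]; norm_num
    have h2 : (1 : ℝ) - 1/64 ≤ Real.exp (-(1/64) : ℝ) := by
      have := Real.add_one_le_exp (-(1/64) : ℝ); linarith
    have h3 : Real.exp (-(1/4) : ℝ) = Real.exp (-(1/64) : ℝ) ^ (16:ℕ) := by
      rw [← Real.exp_nat_mul]; norm_num
    have h4 : ((63:ℝ)/64) ^ (16:ℕ) ≤ Real.exp (-(1/4) : ℝ) := by
      rw [h3]
      exact pow_le_pow_left₀ (by norm_num) (by linarith) 16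
    have h5 : Real.exp (1/4 : ℝ) = (Real.exp (-(1/4) : ℝ))⁻¹ := by
      rw [← Real.exp_neg]; norm_num
    have h6 : Real.exp (1/4 : ℝ) ≤ (((63:ℝ)/64) ^ (16:ℕ))⁻¹ := by
      rw [h5]
      exact inv_anti₀ (by positivity) h4
    have h7 : Real.exp 1 < 2.7182818286 := Real.exp_one_lt_d9
    calc Real.exp (5/4 : ℝ) = Real.exp 1 * Real.exp (1/4 : ℝ) := h1
      _ ≤ 2.7182818286 * (((63:ℝ)/64) ^ (16:ℕ))⁻¹ :=
          mul_le_mul h7.le h6 (Real.exp_pos _).le (by norm_num)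
      _ ≤ 3.4974 := by norm_num
  -- counting conversions
  have hncard : ∀ t : ℝ, ((Set.ncard {v : X | dist z v ≤ t} : ℝ)) = Stmt8Aux.cnt z t := by
    intro t
    rw [Stmt8Aux.cnt, Set.ncard_eq_toFinset_card', Set.toFinset_setOf, ← Finset.sum_boole]
  rw [hncard R1, hncard R0] at hlightball
  have hρpos : (0:ℝ) < (1/β) ^ (q+1) := Real.rpow_pos_of_pos (by positivity) _
  set G3 : ℝ := Stmt8Aux.pot z (3 * R0 - r) with hG3
  have hG3pos : 0 < G3 := by
    have h1 := Stmt8Aux.pot_growth (z := z) (show (0:ℝ) ≤ 3 * R0 - r by linarith)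
    have h2 := Stmt8Aux.one_le_cnt (z := z) (le_refl (0:ℝ))
    have h3 := Stmt8Aux.pot_nonneg z (0:ℝ)
    have h4 : (3*R0 - r) * 1 ≤ (3*R0 - r) * Stmt8Aux.cnt z 0 :=
      mul_le_mul_of_nonneg_left h2 (by linarith only [hrR0, hR0pos])
    rw [hG3]
    linarith only [h1, h3, h4, hrR0, hR0pos]
  have hpR : Stmt8Aux.pot z (R1 - r) ≤ R * Stmt8Aux.cnt z R1 := by
    rw [Stmt8Aux.pot, Stmt8Aux.cnt, Finset.mul_sum]
    refine Finset.sum_le_sum fun v _ => ?_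
    split_ifs with hv
    · rw [mul_one]
      exact max_le (by linarith [dist_nonneg (x := z) (y := v)]) hR.le
    · push_neg at hv
      rw [mul_zero, max_eq_right (by linarith)]
  have hG3R0 : R0 * Stmt8Aux.cnt z R0 ≤ G3 := by
    rw [hG3, Stmt8Aux.pot, Stmt8Aux.cnt, Finset.mul_sum]
    refine Finset.sum_le_sum fun v _ => ?_
    split_ifs with hv
    · rw [mul_one]
      exact le_trans (by linarith : R0 ≤ 3 * R0 - r - dist z v) (le_max_left _ _)
    · rw [mul_zero]; exact le_max_right _ _
  set Dρ : ℝ := Dβ * ((1/β) ^ (q+1)) with hDρ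
  have hDρpos : 0 < Dρ := mul_pos hDpos hρpos
  set k₀ : ℕ := ⌊(2/5) * Real.log Dρ⌋₊ with hk₀def
  have hlogDρ2 : Real.log Dρ = Real.log Dβ + Dβ / 2 := by
    rw [hDρ, Real.log_mul hDpos.ne' (ne_of_gt hρpos), Real.log_rpow (by positivity), hD]
    ring
  have hlogDpos : 0 < Real.log Dβ := Real.log_pos (by linarith)
  have hlogDρpos : 0 ≤ (2/5) * Real.log Dρ := by
    rw [hlogDρ2]; linarith only [hlogDpos, hDpos]
  have hk₀ub : (k₀:ℝ) ≤ (2/5) * (Real.log Dβ + Dβ/2) := by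
    calc ((k₀ : ℕ) : ℝ) ≤ (2/5) * Real.log Dρ := Nat.floor_le hlogDρpos
      _ = _ := by rw [hlogDρ2]
  have hcap : Stmt8Aux.pot z (R1 - r) < G3 * K ^ (k₀ + 1) := by
    have h1 : Real.log Dρ < (5/2) * ((k₀:ℝ) + 1) := by
      have h0 := Nat.lt_floor_add_one ((2/5) * Real.log Dρ)
      rw [← hk₀def] at h0
      linarith
    have h2 : Dρ < K ^ (k₀ + 1) := by
      have e : (K : ℝ) ^ (k₀ + 1) = Real.exp (((k₀ + 1 : ℕ) : ℝ) * (5/2)) := by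
        rw [hKdef, ← Real.exp_nat_mul]
      rw [e]
      calc Dρ = Real.exp (Real.log Dρ) := (Real.exp_log hDρpos).symm
        _ < _ := Real.exp_lt_exp.mpr (by push_cast; linarith)
    have h3 : R * Stmt8Aux.cnt z R1 ≤ R * ((1/β)^(q+1) * Stmt8Aux.cnt z R0) :=
      mul_le_mul_of_nonneg_left hlightball hR.le
    have h4 : R * ((1/β)^(q+1) * Stmt8Aux.cnt z R0) = Dρ * (R0 * Stmt8Aux.cnt z R0) := by
      rw [hDρ, hRD]; ring
    have h5 : Dρ * (R0 * Stmt8Aux.cnt z R0) ≤ Dρ * G3 :=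
      mul_le_mul_of_nonneg_left hG3R0 hDρpos.le
    have h6 : Dρ * G3 < K ^ (k₀ + 1) * G3 := mul_lt_mul_of_pos_right h2 hG3pos
    calc Stmt8Aux.pot z (R1 - r) ≤ R * Stmt8Aux.cnt z R1 := hpR
      _ ≤ R * ((1/β)^(q+1) * Stmt8Aux.cnt z R0) := h3
      _ = Dρ * (R0 * Stmt8Aux.cnt z R0) := h4
      _ ≤ Dρ * G3 := h5
      _ < K ^ (k₀ + 1) * G3 := h6
      _ = G3 * K ^ (k₀+1) := by ring
  have hlogD : Real.log Dβ ≤ 7 * Real.log 2 + (Dβ / 128 - 1) := by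
    have h1 : Real.log Dβ = Real.log 128 + Real.log (Dβ / 128) := by
      rw [← Real.log_mul (by norm_num) (div_ne_zero hDpos.ne' (by norm_num))]
      congr 1
      ring
    have h2 : Real.log (128:ℝ) = 7 * Real.log 2 := by
      rw [show (128:ℝ) = 2 ^ (7:ℕ) by norm_num, Real.log_pow]
      push_cast; ring
    have h3 : Real.log (Dβ / 128) ≤ Dβ / 128 - 1 :=
      Real.log_le_sub_one_of_pos (by positivity)
    rw [h1, h2]; linarith
  -- bad radii handling
  have hbad_sub : ∀ s ∈ Set.Ioc (3*R0) R1,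
      (¬ ∀ u : X,
          (∑ v : X, if dist u v ≤ r ∧ Xor' (dist z u ≤ s) (dist z v ≤ s)
              then (1 : ℝ) else 0)
          ≤ 25 * β * Dβ ^ 2 *
              ∑ v : X, (if dist u v ≤ 2 * R then
                (dist u v / R) * (if dist z u ≤ s ∨ dist z v ≤ s then 1 else 0)
                else 0)) → s ∈ Stmt8Aux.badSet z r c := by
    intro s hs hvio
    push_neg at hvio
    obtain ⟨u, hu⟩ := hvio
    apply Stmt8Aux.violation_mem_badSet z u hr hR hs.2 hR1R hcpos
    rw [hcR]
    exact not_le.mpr hu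
  have hhalf : R / 2 ≤ R1 - 3 * R0 := by rw [hR1]; linarith only [h101, hR0pos]
  by_cases hne : (Stmt8Aux.badSet z r c ∩ Set.Icc (3*R0) R1).Nonempty
  · -- nonempty bad set
    set s₀ : ℝ := sInf (Stmt8Aux.badSet z r c ∩ Set.Icc (3*R0) R1) with hs₀def
    have hs₀mem := Stmt8Aux.badSet_inf_mem z hcpos.le _ hne
      (fun x hx => hx)
    obtain ⟨hs₀bad, hs₀lo, hs₀hi⟩ := hs₀mem
    have hpot₀ : G3 * (1 + c * r * (((0 * (0-1) : ℕ)) : ℝ)) ≤ Stmt8Aux.pot z (s₀ - r) := by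
      norm_num
      exact Stmt8Aux.pot_mono z (by linarith)
    have hcnt₀ : c * ((0:ℕ) : ℝ) * G3 ≤ Stmt8Aux.cnt z (s₀ - r) := by
      norm_num
      exact Stmt8Aux.cnt_nonneg z _
    have hvol := Stmt8Aux.packing z r c K R1 M hr.le hcpos.le hKpos hMprop
      (k₀ * (M+1) + (M - 0)) k₀ 0 G3 s₀ le_rfl (Nat.zero_le _) hG3pos hs₀bad hs₀hi
      hpot₀ hcnt₀ hcap
    have hnum : 2*r*(((k₀*(M+1) + (M - 0) : ℕ) : ℝ) + 1) + R/2 ≤ R1 - 3*R0 := by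
      have hcast : ((k₀*(M+1) + (M - 0) : ℕ) : ℝ) + 1 = ((k₀:ℝ) + 1) * ((M:ℝ) + 1) := by
        push_cast [Nat.sub_zero]
        ring
      rw [hcast]
      have hb1 : 2*r*((M:ℝ)+1) ≤ 2*3.4974*(R0/5) + 0.5656856*R0 := by
        have h1 : 2*r*((M:ℝ)+1) ≤ 2*r*(Real.sqrt ((K-1)/(c*r)) + 2) :=
          mul_le_mul_of_nonneg_left (by linarith) (by linarith)
        have h3 : 2*Real.exp (5/4)*(R0/5) ≤ 2*3.4974*(R0/5) :=
          mul_le_mul_of_nonneg_right (by linarith) (by positivity)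
        linarith only [h1, h3, hsqrtKb, h4r]
      have hb2 : (k₀:ℝ) + 1 ≤ 2.5409 + 0.203125*Dβ := by
        linarith only [Real.log_two_lt_d9, hk₀ub, hlogD]
      have hk₀nn : (0:ℝ) ≤ (k₀:ℝ) := Nat.cast_nonneg _
      have hMnn : (0:ℝ) ≤ (M:ℝ) := Nat.cast_nonneg _
      have hb1nn : (0:ℝ) ≤ 2*r*((M:ℝ)+1) := by positivity
      have hprod : ((k₀:ℝ)+1)*(2*r*((M:ℝ)+1))
          ≤ (2.5409 + 0.203125*Dβ) * (2*3.4974*(R0/5) + 0.5656856*R0) :=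
        mul_le_mul hb2 hb1 hb1nn (by linarith)
      have hfin : (2.5409 + 0.203125*Dβ) * (2*3.4974*(R0/5) + 0.5656856*R0) + R/2
          ≤ R1 - 3*R0 := by
        rw [hR1, hRD]
        linarith only [mul_nonneg (show (0:ℝ) ≤ Dβ - 101 by linarith only [hD101]) hR0pos.le,
          hR0pos]
      linarith only [hprod, hfin]
    have hcover : Set.Ioc (3*R0) R1 ⊆
        {s : ℝ | s ∈ Set.Ioc (3 * R0) R1 ∧
          ∀ u : X,
            (∑ v : X, if dist u v ≤ r ∧ Xor' (dist z u ≤ s) (dist z v ≤ s)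
                then (1 : ℝ) else 0)
            ≤ 25 * β * Dβ ^ 2 *
                ∑ v : X, (if dist u v ≤ 2 * R then
                  (dist u v / R) * (if dist z u ≤ s ∨ dist z v ≤ s then 1 else 0)
                  else 0)} ∪ (Stmt8Aux.badSet z r c ∩ Set.Icc s₀ R1) := by
      intro s hs
      by_cases hgood : ∀ u : X,
          (∑ v : X, if dist u v ≤ r ∧ Xor' (dist z u ≤ s) (dist z v ≤ s)
              then (1 : ℝ) else 0)
          ≤ 25 * β * Dβ ^ 2 *
              ∑ v : X, (if dist u v ≤ 2 * R then
                (dist u v / R) * (if dist z u ≤ s ∨ dist z v ≤ s then 1 else 0)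
                else 0)
      · exact Or.inl ⟨hs, hgood⟩
      · have hsbad := hbad_sub s hs hgood
        right
        refine ⟨hsbad, ?_, hs.2⟩
        exact csInf_le ⟨3*R0, fun y hy => hy.2.1⟩ ⟨hsbad, Set.mem_Icc_of_Ioc hs⟩
    have h1 : ENNReal.ofReal (R1 - 3*R0) ≤
        MeasureTheory.volume {s : ℝ | s ∈ Set.Ioc (3 * R0) R1 ∧
          ∀ u : X,
            (∑ v : X, if dist u v ≤ r ∧ Xor' (dist z u ≤ s) (dist z v ≤ s)
                then (1 : ℝ) else 0)
            ≤ 25 * β * Dβ ^ 2 *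
                ∑ v : X, (if dist u v ≤ 2 * R then
                  (dist u v / R) * (if dist z u ≤ s ∨ dist z v ≤ s then 1 else 0)
                  else 0)} + ENNReal.ofReal (2*r*(((k₀*(M+1) + (M - 0) : ℕ) : ℝ) + 1)) := by
      calc ENNReal.ofReal (R1 - 3*R0) = MeasureTheory.volume (Set.Ioc (3*R0) R1) :=
            (Real.volume_Ioc).symm
        _ ≤ _ := le_trans (measure_mono hcover)
              (le_trans (measure_union_le _ _) (add_le_add le_rfl hvol))
    have h2 : ENNReal.ofReal (R/2) + ENNReal.ofReal (2*r*(((k₀*(M+1) + (M - 0) : ℕ) : ℝ) + 1))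
        ≤ ENNReal.ofReal (R1 - 3*R0) := by
      rw [← ENNReal.ofReal_add (by positivity)
        (mul_nonneg (by positivity) (by positivity))]
      exact ENNReal.ofReal_le_ofReal (by linarith)
    have h3 := le_trans h2 h1
    exact (ENNReal.add_le_add_iff_right ENNReal.ofReal_ne_top).mp h3
  · -- bad set empty: everything good
    have hsub : Set.Ioc (3*R0) R1 ⊆
        {s : ℝ | s ∈ Set.Ioc (3 * R0) R1 ∧
          ∀ u : X,
            (∑ v : X, if dist u v ≤ r ∧ Xor' (dist z u ≤ s) (dist z v ≤ s)
                then (1 : ℝ) else 0)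
            ≤ 25 * β * Dβ ^ 2 *
                ∑ v : X, (if dist u v ≤ 2 * R then
                  (dist u v / R) * (if dist z u ≤ s ∨ dist z v ≤ s then 1 else 0)
                  else 0)} := by
      intro s hs
      refine ⟨hs, ?_⟩
      by_contra hcon
      exact hne ⟨s, hbad_sub s hs hcon, Set.mem_Icc_of_Ioc hs⟩
    calc ENNReal.ofReal (R/2) ≤ ENNReal.ofReal (R1 - 3*R0) :=
          ENNReal.ofReal_le_ofReal hhalf
      _ = MeasureTheory.volume (Set.Ioc (3*R0) R1) := (Real.volume_Ioc).symm
      _ ≤ _ := measure_mono hsub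
end

section
/- Let R > 0, r ∈ (0,R], γ ∈ (0,1/r], and let Φ : [0,R] → ℝ be a nondecreasing function with Φ(0) = 1. Let S be the set of all t ∈ [0,R−r] such that Φ(t+r) ≥ Φ(t) + γ·∫_0^t Φ(x) dx. Then Φ(R) ≥ e^{η·μ(S) − 1}, where η = √(γ/((e−1)·r)) and μ(S) is the Lebesgue measure of S. -/
/-!
The function `s = cumulVolume S`, `s t = μ(S ∩ [0, t])`, is nondecreasing and 1-Lipschitz.
For `0 < c < η` compare `Φ` with `g = expProfile c`, `g u = max 1 (exp (c u - 1))`: we show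
`g (s t) ≤ Φ t` by induction in steps of length `r`.
Fix `d > r` with `c d ≤ 1` and `(e - 1) c² d ≤ γ`; such a `d` exists precisely because `c < η`.
If `s t` is not small, there is `t' ∈ S` with `t' ≤ t - r` and `s t ≤ s t' + d`, hence
`Φ t ≥ Φ (t' + r) ≥ Φ t' + γ ∫₀^{t'} Φ ≥ g (s t') + γ ∫₀^{s t'} g ≥ g (s t' + d) ≥ g (s t)`.
The third step uses that `s` is 1-Lipschitz, the fourth the chord bound `eˣ ≤ 1 + (e - 1) x`
on `[0, 1]`. At `t = R` this gives `Φ R ≥ exp (c μ(S) - 1)`, and we let `c → η`.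
-/

open MeasureTheory Set Filter Topology Real

theorem exp_le_one_add_mul_of_mem_Icc {x : ℝ} (hx : x ∈ Icc (0 : ℝ) 1) :
    exp x ≤ 1 + (exp 1 - 1) * x := by
  have h := convexOn_exp.2 (mem_univ 0) (mem_univ 1) (sub_nonneg.2 hx.2) hx.1 (by ring)
  simp only [smul_eq_mul, mul_zero, mul_one, zero_add, exp_zero] at h
  linarith

theorem forall_nonneg_of_step {r : ℝ} (hr : 0 < r) {P : ℝ → Prop}
    (h : ∀ t, 0 ≤ t → (∀ x ∈ Icc 0 (t - r), P x) → P t) (t : ℝ) (ht : 0 ≤ t) : P t := by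
  have hIco : ∀ n : ℕ, ∀ t ∈ Ico 0 (n * r), P t := by
    intro n
    induction n with
    | zero => simp
    | succ n ih =>
      refine fun t ht ↦ h t ht.1 fun x hx ↦ ih x ⟨hx.1, ?_⟩
      push_cast at ht
      linarith [hx.2, ht.2]
  obtain ⟨n, hn⟩ := exists_nat_gt (t / r)
  exact hIco n t ⟨ht, (div_lt_iff₀ hr).1 hn⟩

section cumulVolume

noncomputable def cumulVolume (S : Set ℝ) (t : ℝ) : ℝ := (volume (S ∩ Icc 0 t)).toReal

variable {S : Set ℝ}

theorem volume_inter_Icc_ne_top (S : Set ℝ) (t : ℝ) : volume (S ∩ Icc 0 t) ≠ ⊤ :=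
  ne_top_of_le_ne_top (by simp) (measure_mono inter_subset_right)

theorem cumulVolume_le_of_inter_subset {x y : ℝ} (h : S ∩ Icc 0 y ⊆ S ∩ Icc 0 x) :
    cumulVolume S y ≤ cumulVolume S x :=
  ENNReal.toReal_mono (volume_inter_Icc_ne_top S x) (measure_mono h)

theorem cumulVolume_nonneg (S : Set ℝ) (t : ℝ) : 0 ≤ cumulVolume S t := ENNReal.toReal_nonneg

theorem monotone_cumulVolume (S : Set ℝ) : Monotone (cumulVolume S) := fun _ _ hxy ↦
  cumulVolume_le_of_inter_subset (inter_subset_inter_right _ (Icc_subset_Icc_right hxy))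

theorem cumulVolume_zero (S : Set ℝ) : cumulVolume S 0 = 0 := by
  refine le_antisymm ?_ (cumulVolume_nonneg S 0)
  calc cumulVolume S 0 ≤ (volume (Icc (0 : ℝ) 0)).toReal :=
        ENNReal.toReal_mono (by simp) (measure_mono inter_subset_right)
    _ = 0 := by simp

theorem cumulVolume_le_add_sub {x y : ℝ} (hxy : x ≤ y) :
    cumulVolume S y ≤ cumulVolume S x + (y - x) := by
  have hsub : S ∩ Icc 0 y ⊆ (S ∩ Icc 0 x) ∪ Ioc x y := by
    rintro z ⟨hzS, hz0, hzy⟩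
    rcases le_or_gt z x with h | h
    · exact Or.inl ⟨hzS, hz0, h⟩
    · exact Or.inr ⟨h, hzy⟩
  calc cumulVolume S y ≤ (volume (S ∩ Icc 0 x) + volume (Ioc x y)).toReal :=
        ENNReal.toReal_mono (by simpa using volume_inter_Icc_ne_top S x)
          ((measure_mono hsub).trans (measure_union_le _ _))
    _ = cumulVolume S x + (y - x) := by
        rw [ENNReal.toReal_add (volume_inter_Icc_ne_top S x) (by simp), Real.volume_Ioc,
          ENNReal.toReal_ofReal (sub_nonneg.2 hxy)]
        rfl

theorem cumulVolume_le_self {t : ℝ} (ht : 0 ≤ t) : cumulVolume S t ≤ t := by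
  simpa [cumulVolume_zero] using cumulVolume_le_add_sub (S := S) ht

theorem continuous_cumulVolume (S : Set ℝ) : Continuous (cumulVolume S) := by
  refine (LipschitzWith.of_le_add fun x y ↦ ?_).continuous
  rw [Real.dist_eq]
  rcases le_total x y with h | h
  · linarith [monotone_cumulVolume S h, abs_nonneg (x - y)]
  · linarith [cumulVolume_le_add_sub (S := S) h, le_abs_self (x - y)]

theorem exists_mem_sub_le_cumulVolume {T ε : ℝ} (hε : 0 < ε) (hεT : ε ≤ cumulVolume S T) :
    ∃ t ∈ S ∩ Icc 0 T, cumulVolume S T - ε ≤ cumulVolume S t := by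
  obtain ⟨c, hc⟩ : cumulVolume S T - ε ∈ range (cumulVolume S) :=
    intermediate_value_univ 0 T (continuous_cumulVolume S)
      ⟨by rw [cumulVolume_zero]; linarith, by linarith⟩
  by_contra! hno
  have hsub : S ∩ Icc 0 T ⊆ S ∩ Icc 0 c := fun x hx ↦
    ⟨hx.1, hx.2.1, not_lt.1 fun hcx ↦ (hno x hx).not_ge (hc ▸ monotone_cumulVolume S hcx.le)⟩
  linarith [cumulVolume_le_of_inter_subset hsub]

theorem integral_le_integral_comp_cumulVolume {g : ℝ → ℝ} (hg : Monotone g)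
    (hg0 : ∀ x, 0 ≤ g x) {T : ℝ} (hT : 0 ≤ T) :
    ∫ x in 0..cumulVolume S T, g x ≤ ∫ x in 0..T, g (cumulVolume S x) := by
  set σ := cumulVolume S T
  have hshift : ∫ x in 0..T, g (x + (σ - T)) = ∫ x in σ - T..σ, g x := by
    simp [intervalIntegral.integral_comp_add_right]
  have hhead : 0 ≤ ∫ x in σ - T..0, g x :=
    intervalIntegral.integral_nonneg (by linarith [cumulVolume_le_self (S := S) hT])
      fun x _ ↦ hg0 x
  calc ∫ x in 0..σ, g x ≤ ∫ x in σ - T..σ, g x := by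
        rw [← intervalIntegral.integral_add_adjacent_intervals (a := σ - T) (b := 0)
          hg.intervalIntegrable hg.intervalIntegrable]
        linarith
    _ = ∫ x in 0..T, g (x + (σ - T)) := hshift.symm
    _ ≤ ∫ x in 0..T, g (cumulVolume S x) :=
        intervalIntegral.integral_mono_on hT
          (hg.comp (monotone_id.add_const _)).intervalIntegrable
          (hg.comp (monotone_cumulVolume S)).intervalIntegrable
          fun x hx ↦ hg (by linarith [cumulVolume_le_add_sub (S := S) hx.2])

end cumulVolume

section expProfile

noncomputable def expProfile (c u : ℝ) : ℝ := max 1 (exp (c * u - 1))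

variable {c : ℝ}

theorem one_le_expProfile (c u : ℝ) : 1 ≤ expProfile c u := le_max_left _ _

theorem exp_le_expProfile (c u : ℝ) : exp (c * u - 1) ≤ expProfile c u := le_max_right _ _

theorem expProfile_eq_one {u : ℝ} (h : c * u ≤ 1) : expProfile c u = 1 :=
  max_eq_left (exp_le_one_iff.2 (by linarith))

theorem monotone_expProfile (hc : 0 ≤ c) : Monotone (expProfile c) := fun _ _ huv ↦
  max_le_max le_rfl (exp_le_exp.2 (by nlinarith))

theorem continuous_expProfile (c : ℝ) : Continuous (expProfile c) := by
  unfold expProfile; fun_prop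

theorem le_integral_expProfile {u : ℝ} (hu : 0 ≤ u) : u ≤ ∫ x in 0..u, expProfile c x := by
  simpa using intervalIntegral.integral_mono_on hu intervalIntegrable_const
    ((continuous_expProfile c).intervalIntegrable (μ := volume) 0 u)
    fun x _ ↦ one_le_expProfile c x

theorem integral_exp_mul_sub_one (hc : c ≠ 0) (a b : ℝ) :
    ∫ x in a..b, exp (c * x - 1) = (exp (c * b - 1) - exp (c * a - 1)) / c := by
  rw [sub_div]
  refine intervalIntegral.integral_eq_sub_of_hasDerivAt (f := fun x ↦ exp (c * x - 1) / c)
    (fun x _ ↦ ?_) ((by fun_prop : Continuous fun x ↦ exp (c * x - 1)).intervalIntegrable _ _)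
  have := (((hasDerivAt_id' x).const_mul c).sub_const 1).exp.div_const c
  rwa [mul_one, mul_div_cancel_right₀ _ hc] at this

theorem exp_div_le_integral_expProfile (hc : 0 < c) {u : ℝ} (hu : 1 ≤ c * u) :
    exp (c * u - 1) / c ≤ ∫ x in 0..u, expProfile c x := by
  have h1c : 1 / c ≤ u := by rwa [div_le_iff₀ hc, mul_comm]
  have hint := (continuous_expProfile c).intervalIntegrable (μ := volume)
  have hhead : 1 / c ≤ ∫ x in 0..1 / c, expProfile c x := le_integral_expProfile (by positivity)
  have htail : (exp (c * u - 1) - 1) / c ≤ ∫ x in 1 / c..u, expProfile c x := by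
    have := intervalIntegral.integral_mono_on h1c ((by fun_prop : Continuous fun x ↦
      exp (c * x - 1)).intervalIntegrable _ _) (hint _ _) fun x _ ↦ exp_le_expProfile c x
    rwa [integral_exp_mul_sub_one hc.ne', mul_one_div_cancel hc.ne', sub_self, exp_zero] at this
  rw [← intervalIntegral.integral_add_adjacent_intervals (hint 0 (1 / c)) (hint _ u)]
  calc exp (c * u - 1) / c = 1 / c + (exp (c * u - 1) - 1) / c := by ring
    _ ≤ _ := add_le_add hhead htail

theorem expProfile_add_le (hc : 0 < c) {d γ : ℝ} (hd : 0 ≤ d) (hcd : c * d ≤ 1)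
    (hγ : (exp 1 - 1) * c ^ 2 * d ≤ γ) {u : ℝ} (hu : 0 ≤ u) :
    expProfile c (u + d) ≤ expProfile c u + γ * ∫ x in 0..u, expProfile c x := by
  have he : 0 < exp 1 - 1 := by linarith [add_one_lt_exp one_ne_zero]
  have hγ0 : 0 ≤ γ := le_trans (by positivity) hγ
  have hI : u ≤ ∫ x in 0..u, expProfile c x := le_integral_expProfile hu
  refine max_le (by nlinarith [one_le_expProfile c u]) ?_
  rcases le_total (c * u) 1 with hcu | hcu
  · rcases le_total (c * (u + d) - 1) 0 with hneg | hpos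
    · nlinarith [exp_le_one_iff.2 hneg, one_le_expProfile c u]
    · have hx := exp_le_one_add_mul_of_mem_Icc ⟨hpos, by nlinarith⟩
      have : (exp 1 - 1) * (c * (u + d) - 1) ≤ γ * u := by
        nlinarith [mul_nonneg (sub_nonneg.2 hcu) (sub_nonneg.2 hcd)]
      nlinarith [one_le_expProfile c u]
  · have hx := exp_le_one_add_mul_of_mem_Icc ⟨by positivity, hcd⟩
    have hI' := exp_div_le_integral_expProfile hc hcu
    calc exp (c * (u + d) - 1) = exp (c * u - 1) * exp (c * d) := by rw [← exp_add]; ring_nf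
      _ ≤ exp (c * u - 1) * (1 + (exp 1 - 1) * (c * d)) := by gcongr
      _ = exp (c * u - 1) + (exp 1 - 1) * c ^ 2 * d * (exp (c * u - 1) / c) := by
          field_simp
      _ ≤ expProfile c u + γ * ∫ x in 0..u, expProfile c x := by
          gcongr
          exact exp_le_expProfile c u

end expProfile

theorem expProfile_cumulVolume_le {R r γ c d : ℝ} {Φ : ℝ → ℝ} {S : Set ℝ} (hr : 0 < r)
    (hc : 0 < c) (hrd : r < d) (hcd : c * d ≤ 1) (hγ : (exp 1 - 1) * c ^ 2 * d ≤ γ)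
    (hmono : MonotoneOn Φ (Icc 0 R)) (hΦ : ∀ t ∈ Icc 0 R, 1 ≤ Φ t)
    (hS : ∀ t ∈ S, Φ t + γ * ∫ x in 0..t, Φ x ≤ Φ (t + r)) {t : ℝ} (ht : t ∈ Icc 0 R) :
    expProfile c (cumulVolume S t) ≤ Φ t := by
  have he : 0 < exp 1 - 1 := by linarith [add_one_lt_exp one_ne_zero]
  have hγ0 : 0 ≤ γ := le_trans (by have := hr.trans hrd; positivity) hγ
  have hg := monotone_expProfile hc.le
  set s := cumulVolume S
  refine forall_nonneg_of_step hr (P := fun t ↦ t ≤ R → expProfile c (s t) ≤ Φ t)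
    (fun t ht0 IH htR ↦ ?_) t ht.1 ht.2
  have hst : s t ≤ s (t - r) + r := by
    simpa using cumulVolume_le_add_sub (S := S) (sub_le_self t hr.le)
  rcases lt_or_ge (s (t - r)) (d - r) with hsmall | hlarge
  · rw [expProfile_eq_one (by nlinarith [cumulVolume_nonneg S t])]
    exact hΦ t ⟨ht0, htR⟩
  obtain ⟨t', ⟨ht'S, ht'0, ht'⟩, hst'⟩ := exists_mem_sub_le_cumulVolume (sub_pos.2 hrd) hlarge
  have hgood : ∀ x ∈ Icc 0 t', expProfile c (s x) ≤ Φ x := fun x hx ↦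
    IH x ⟨hx.1, hx.2.trans ht'⟩ (by linarith [hx.2])
  have hΦint : IntervalIntegrable Φ volume 0 t' := by
    refine (hmono.mono ?_).intervalIntegrable
    rw [uIcc_of_le ht'0]
    exact Icc_subset_Icc_right (by linarith)
  have hint : ∫ x in 0..s t', expProfile c x ≤ ∫ x in 0..t', Φ x :=
    (integral_le_integral_comp_cumulVolume hg
      (fun x ↦ zero_le_one.trans (one_le_expProfile c x)) ht'0).trans
    (intervalIntegral.integral_mono_on ht'0
      (hg.comp (monotone_cumulVolume S)).intervalIntegrable hΦint hgood)
  calc expProfile c (s t) ≤ expProfile c (s t' + d) := hg (by linarith)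
    _ ≤ expProfile c (s t') + γ * ∫ x in 0..s t', expProfile c x :=
        expProfile_add_le hc (by linarith) hcd hγ (cumulVolume_nonneg S t')
    _ ≤ Φ t' + γ * ∫ x in 0..t', Φ x :=
        add_le_add (hgood t' ⟨ht'0, le_rfl⟩) (mul_le_mul_of_nonneg_left hint hγ0)
    _ ≤ Φ (t' + r) := hS t' ht'S
    _ ≤ Φ t := hmono ⟨by linarith, by linarith⟩ ⟨ht0, htR⟩ (by linarith)

theorem exists_step_of_lt_sqrt {r γ c : ℝ} (hr : 0 < r) (hγr : γ * r ≤ 1) (hc : 0 < c)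
    (hcη : c < √(γ / ((exp 1 - 1) * r))) :
    ∃ d, r < d ∧ c * d ≤ 1 ∧ (exp 1 - 1) * c ^ 2 * d ≤ γ := by
  have he : 1 < exp 1 - 1 := by linarith [exp_one_gt_d9]
  have hq : 0 < γ / ((exp 1 - 1) * r) := sqrt_pos.1 (hc.trans hcη)
  have hcr : (exp 1 - 1) * c ^ 2 * r < γ := by
    have := (sq_lt_sq₀ hc.le (sqrt_nonneg _)).2 hcη
    rw [sq_sqrt hq.le, lt_div_iff₀ (by positivity)] at this
    linarith
  have hcr1 : c * r < 1 := by
    have h1 := mul_lt_mul_of_pos_right hcr hr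
    have h2 : 0 < (c * r) ^ 2 := by positivity
    nlinarith
  refine ⟨min (1 / c) (γ / ((exp 1 - 1) * c ^ 2)), lt_min ?_ ?_, ?_, ?_⟩
  · rwa [lt_div_iff₀ hc, mul_comm]
  · rw [lt_div_iff₀ (by positivity)]
    linarith
  · have := (le_div_iff₀ hc).1 (min_le_left (1 / c) (γ / ((exp 1 - 1) * c ^ 2)))
    linarith
  · have := (le_div_iff₀ (by positivity)).1 (min_le_right (1 / c) (γ / ((exp 1 - 1) * c ^ 2)))
    linarith

/-- Let `R > 0`, `r ∈ (0,R]`, `γ ∈ (0,1/r]`, and let `Φ : [0,R] → ℝ`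
be nondecreasing with `Φ(0) = 1`. Let `S` be the set of all `t ∈ [0,R−r]` with
`Φ(t+r) ≥ Φ(t) + γ ∫_0^t Φ(x) dx`. Then `Φ(R) ≥ e^{η μ(S) − 1}`, where
`η = √(γ/((e−1)r))` and `μ` is Lebesgue measure. -/
theorem stmt9 (R r γ : ℝ) (hR : 0 < R) (hr : r ∈ Set.Ioc 0 R) (hγ : γ ∈ Set.Ioc 0 (1 / r))
    (Φ : ℝ → ℝ) (hmono : MonotoneOn Φ (Set.Icc 0 R)) (h0 : Φ 0 = 1)
    (S : Set ℝ)
    (hS : S = {t : ℝ | t ∈ Set.Icc 0 (R - r) ∧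
      Φ t + γ * ∫ x in (0 : ℝ)..t, Φ x ≤ Φ (t + r)}) :
    Real.exp (Real.sqrt (γ / ((Real.exp 1 - 1) * r)) * (MeasureTheory.volume S).toReal - 1)
      ≤ Φ R := by
  obtain ⟨hr0, -⟩ := hr
  obtain ⟨hγ0, hγr⟩ := hγ
  set η := √(γ / ((exp 1 - 1) * r))
  set M := (volume S).toReal
  have hM : M = cumulVolume S R := by
    rw [cumulVolume, inter_eq_left.2 fun t ht ↦ ?_]
    rw [hS] at ht
    exact ⟨ht.1.1, by linarith [ht.1.2]⟩
  have hbound : ∀ c ∈ Ioo 0 η, exp (c * M - 1) ≤ Φ R := by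
    rintro c ⟨hc0, hcη⟩
    obtain ⟨d, hrd, hcd, hγd⟩ := exists_step_of_lt_sqrt hr0 ((le_div_iff₀ hr0).1 hγr) hc0 hcη
    rw [hM]
    refine (exp_le_expProfile c _).trans (expProfile_cumulVolume_le hr0 hc0 hrd hcd hγd hmono
      (fun t ht ↦ h0 ▸ hmono ⟨le_rfl, hR.le⟩ ht ht.1) (fun t ht ↦ ?_) ⟨hR.le, le_rfl⟩)
    rw [hS] at ht
    exact ht.2
  have hη0 : 0 < η := sqrt_pos.2 (div_pos hγ0 (mul_pos (by linarith [exp_one_gt_d9]) hr0))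
  exact le_of_tendsto (((by fun_prop : Continuous fun c ↦ exp (c * M - 1)).tendsto η).mono_left
    nhdsWithin_le_nhds) (eventually_of_mem (Ioo_mem_nhdsLT hη0) hbound)
end

section
/- Let q ≥ 1, β ∈ (0,1) with β^{q+1} ≤ 1/2, and R > 0. Set D_β = 2(q+1)·ln(1/β) and R_0 = R/D_β. Then for all x₁, x₂ with 0 ≤ x₁ ≤ x₂ ≤ R/2, we have F(x₂) − F(x₁) ≤ D_β·((x₂ − x₁)/R)·(1 − F(x₁) + 2·β^{q+1}). -/
/-!
Write `p = e^{-R/(2R₀)} = β^{q+1}`, `a = e^{-x₁/R₀}`, `b = e^{-x₂/R₀}` and `s = (x₂ - x₁)/R₀`,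
so that `D_β (x₂ - x₁)/R = s`, `F(x₂) - F(x₁) = (a - b)/(1 - p)` and
`1 - F(x₁) + 2p = (a + p(1 - 2p))/(1 - p)`. Convexity of `exp` gives `a - b ≤ s a`, and
`p (1 - 2p) ≥ 0` because `p ≤ 1/2`. The bound `p ≤ 1/2` also forces `D_β > 0`, since `p = e^{-D_β/2}`.
-/

open Real

lemma Real.exp_sub_exp_le_mul_exp (u v : ℝ) : exp u - exp v ≤ (u - v) * exp u := by
  have h := add_one_le_exp (v - u)
  have hv : exp v = exp (v - u) * exp u := by rw [← exp_add, sub_add_cancel]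
  nlinarith [exp_pos u]

lemma normalized_one_sub_exp_increment_le {r p : ℝ} (hr : 0 < r) (hp0 : 0 ≤ p)
    (hp : p ≤ 1 / 2) (F : ℝ → ℝ) (hF : ∀ x, F x = (1 - exp (-x / r)) / (1 - p))
    {x₁ x₂ : ℝ} (hx : x₁ ≤ x₂) :
    F x₂ - F x₁ ≤ (x₂ - x₁) / r * (1 - F x₁ + 2 * p) := by
  set s := (x₂ - x₁) / r
  have hs : 0 ≤ s := div_nonneg (sub_nonneg.mpr hx) hr.le
  have hconvex : exp (-x₁ / r) - exp (-x₂ / r) ≤ s * exp (-x₁ / r) := by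
    convert exp_sub_exp_le_mul_exp (-x₁ / r) (-x₂ / r) using 2
    ring
  have hpp : 0 ≤ s * (p * (1 - 2 * p)) := by
    have : 0 ≤ 1 - 2 * p := by linarith
    positivity
  have h1p : 0 < 1 - p := by linarith
  rw [hF, hF, div_sub_div_same, div_le_iff₀ h1p]
  calc 1 - exp (-x₂ / r) - (1 - exp (-x₁ / r))
      ≤ s * (exp (-x₁ / r) + p * (1 - 2 * p)) := by linarith
    _ = s * (1 - (1 - exp (-x₁ / r)) / (1 - p) + 2 * p) * (1 - p) := by
      field_simp
      ring

theorem stmt13_general (q β R Dβ R0 : ℝ) (hβ : β ∈ Set.Ioo (0 : ℝ) 1)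
    (hβq : β ^ (q + 1) ≤ 1 / 2) (hR : 0 < R)
    (hD : Dβ = 2 * (q + 1) * Real.log (1 / β)) (hR0 : R0 = R / Dβ)
    (F : ℝ → ℝ)
    (hF : ∀ x, F x = (1 - Real.exp (-x / R0)) / (1 - Real.exp (-R / (2 * R0)))) :
    ∀ x₁ x₂ : ℝ, 0 ≤ x₁ → x₁ ≤ x₂ → x₂ ≤ R / 2 →
      F x₂ - F x₁ ≤ Dβ * ((x₂ - x₁) / R) * (1 - F x₁ + 2 * β ^ (q + 1)) := by
  intro x₁ x₂ _ hx₁₂ _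
  have hp : exp (-R / (2 * R0)) = exp (-Dβ / 2) := by
    rw [hR0]
    congr 1
    field_simp
  have hpβ : exp (-Dβ / 2) = β ^ (q + 1) := by
    rw [rpow_def_of_pos hβ.1, hD, one_div, log_inv]
    ring_nf
  have hDβ : 0 < Dβ := by
    have : exp (-Dβ / 2) < exp 0 := by rw [exp_zero, hpβ]; linarith
    linarith [exp_lt_exp.mp this]
  have hR0pos : 0 < R0 := hR0 ▸ div_pos hR hDβ
  have hs : Dβ * ((x₂ - x₁) / R) = (x₂ - x₁) / R0 := by
    rw [hR0]
    field_simp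
  rw [hs, ← hpβ, ← hp]
  exact normalized_one_sub_exp_increment_le hR0pos (exp_nonneg _) (by rwa [hp, hpβ]) F hF hx₁₂

/-- Let `q ≥ 1`, `β ∈ (0,1)` with `β^{q+1} ≤ 1/2`, `R > 0`,
`D_β = 2(q+1)ln(1/β)`, `R₀ = R/D_β`. With
`F(x) = (1 − e^{−x/R₀})/(1 − e^{−R/(2R₀)})`, for all `0 ≤ x₁ ≤ x₂ ≤ R/2` we have
`F(x₂) − F(x₁) ≤ D_β ((x₂ − x₁)/R)(1 − F(x₁) + 2β^{q+1})`. -/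
theorem stmt13 (q β R Dβ R0 : ℝ) (hq : 1 ≤ q) (hβ : β ∈ Set.Ioo (0 : ℝ) 1)
    (hβq : β ^ (q + 1) ≤ 1 / 2) (hR : 0 < R)
    (hD : Dβ = 2 * (q + 1) * Real.log (1 / β)) (hR0 : R0 = R / Dβ)
    (F : ℝ → ℝ)
    (hF : ∀ x, F x = (1 - Real.exp (-x / R0)) / (1 - Real.exp (-R / (2 * R0)))) :
    ∀ x₁ x₂ : ℝ, 0 ≤ x₁ → x₁ ≤ x₂ → x₂ ≤ R / 2 →
      F x₂ - F x₁ ≤ Dβ * ((x₂ - x₁) / R) * (1 - F x₁ + 2 * β ^ (q + 1)) :=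
  stmt13_general q β R Dβ R0 hβ hβq hR hD hR0 F hF
end

section
/- Let (X,d) be a finite metric space, q ≥ 1, and r, R > 0 with β = r/R, R_0 = R/D_β, R_1 = R − R_0, r < R_0 and 3R_0 < R_1. Let z ∈ X satisfy |Ball(u,R_0)| ≤ |Ball(z,R_0)| for all u ∈ X, and suppose the heavy-ball condition |Ball(z,R_1)| ≥ ρ_q(β)·|Ball(z,R_0)| holds, where ρ_q(β) = (1/β)^{q+1}. Set P = Ball(z,R_1). Then for every u ∈ X, Σ_{v ∈ Ball(u,r)} δ_P(u,v) ≤ 2·D_β·β^{q+1}·Σ_{v ∈ Ball(u,2R)} (d(u,v)/R)·∨_P(u,v). -/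
open scoped Classical

/-- (Heavy ball, property (c).) With `β = r/R`, `D_β = 2(q+1)ln(1/β)`,
`R₀ = R/D_β`, `R₁ = R - R₀`, `r < R₀`, `3R₀ < R₁`, let `z` maximize `|Ball(·,R₀)|` and
assume the heavy-ball condition `|Ball(z,R₁)| ≥ (1/β)^{q+1} |Ball(z,R₀)|`. Then for
`P = Ball(z,R₁)` and every `u ∈ X`,
`Σ_{v ∈ Ball(u,r)} δ_P(u,v) ≤ 2 D_β β^{q+1} Σ_{v ∈ Ball(u,2R)} (d(u,v)/R)·∨_P(u,v)`. -/
theorem stmt14 (X : Type) [MetricSpace X] [Fintype X]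
    (q r R β Dβ R0 R1 : ℝ) (hq : 1 ≤ q) (hr : 0 < r) (hR : 0 < R) (hrR : r < R)
    (hβ : β = r / R) (hD : Dβ = 2 * (q + 1) * Real.log (1 / β))
    (hR0 : R0 = R / Dβ) (hR1 : R1 = R - R0) (hrR0 : r < R0) (h3 : 3 * R0 < R1)
    (z : X) (hz : ∀ u : X, Set.ncard {v : X | dist u v ≤ R0}
      ≤ Set.ncard {v : X | dist z v ≤ R0})
    (hheavy : (1 / β) ^ (q + 1) * (Set.ncard {v : X | dist z v ≤ R0} : ℝ)
      ≤ (Set.ncard {v : X | dist z v ≤ R1} : ℝ)) :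
    ∀ u : X,
      (∑ v : X, if dist u v ≤ r ∧ Xor' (dist z u ≤ R1) (dist z v ≤ R1)
          then (1 : ℝ) else 0)
      ≤ 2 * Dβ * β ^ (q + 1) *
          ∑ v : X, (if dist u v ≤ 2 * R then
            (dist u v / R) * (if dist z u ≤ R1 ∨ dist z v ≤ R1 then 1 else 0) else 0) := by
  intro u
  -- basic positivity facts
  have hβpos : 0 < β := by rw [hβ]; positivity
  have hβ1 : β < 1 := by rw [hβ]; exact (div_lt_one hR).2 hrR
  have hlog : 0 < Real.log (1 / β) := Real.log_pos (by rw [lt_div_iff₀ hβpos]; linarith)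
  have hDpos : 0 < Dβ := by rw [hD]; nlinarith
  have hR0pos : 0 < R0 := by rw [hR0]; positivity
  have hDR0 : Dβ * R0 = R := by rw [hR0]; field_simp
  have hD4 : 4 < Dβ := by
    have h4 : 4 * R0 < R := by linarith
    nlinarith
  have hbpos : 0 < β ^ (q + 1) := Real.rpow_pos_of_pos hβpos _
  have hbq : β ^ (q + 1) ≤ 1 / 2 := by
    have h1 : β ^ (q + 1) = Real.exp ((q + 1) * Real.log β) := by
      rw [Real.rpow_def_of_pos hβpos, mul_comm]
    have h2 : (q + 1) * Real.log β = -(Dβ / 2) := by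
      rw [hD, one_div, Real.log_inv]; ring
    have h3' : Real.exp (-(Dβ / 2)) ≤ Real.exp (-2) :=
      Real.exp_le_exp.2 (by linarith)
    have h7 : (2 : ℝ) ≤ Real.exp 2 := by nlinarith [Real.add_one_le_exp (2:ℝ)]
    have h8 : Real.exp (-2) ≤ 1 / 2 := by
      rw [Real.exp_neg, one_div]
      exact inv_anti₀ (by norm_num) h7
    rw [h1, h2]; linarith
  have hinv : β ^ (q + 1) * (1 / β) ^ (q + 1) = 1 := by
    rw [← Real.mul_rpow hβpos.le (by positivity), mul_one_div_cancel hβpos.ne',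
      Real.one_rpow]
  -- names for counts
  set N0 : ℕ := Set.ncard {v : X | dist z v ≤ R0} with hN0
  set N1 : ℕ := Set.ncard {v : X | dist z v ≤ R1} with hN1
  -- RHS summand is nonnegative
  have hterm_nonneg : ∀ v : X, 0 ≤ (if dist u v ≤ 2 * R then
      (dist u v / R) * (if dist z u ≤ R1 ∨ dist z v ≤ R1 then 1 else 0) else 0) := by
    intro v
    split_ifs <;> positivity
  by_cases hex : ∃ v : X, dist u v ≤ r ∧ Xor' (dist z u ≤ R1) (dist z v ≤ R1)
  · -- main case
    obtain ⟨v0, hv0r, hv0x⟩ := hex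
    have hzu : dist z u ≤ R1 + r := by
      rcases hv0x with ⟨h1, _⟩ | ⟨h1, h2⟩
      · linarith
      · have := dist_triangle z v0 u
        rw [dist_comm v0 u] at this
        linarith [dist_comm u v0 ▸ hv0r]
    -- LHS ≤ N0
    have hcard_eq : ∀ (s : Set X) [Fintype s], Set.ncard s = s.toFinset.card := by
      intro s _; exact Set.ncard_eq_toFinset_card' s
    have hB0u : (Finset.univ.filter (fun v : X => dist u v ≤ R0)).card ≤ N0 := by
      have := hz u
      rw [hN0]
      convert this using 1
      rw [Set.ncard_eq_toFinset_card']
      congr 1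
      ext v; simp
    have hLHS : (∑ v : X, if dist u v ≤ r ∧ Xor' (dist z u ≤ R1) (dist z v ≤ R1)
        then (1 : ℝ) else 0) ≤ (N0 : ℝ) := by
      rw [Finset.sum_boole]
      have hsub : (Finset.univ.filter (fun v : X =>
          dist u v ≤ r ∧ Xor' (dist z u ≤ R1) (dist z v ≤ R1)))
          ⊆ Finset.univ.filter (fun v : X => dist u v ≤ R0) := by
        intro v hv
        simp only [Finset.mem_filter, Finset.mem_univ, true_and] at hv ⊢
        linarith [hv.1]
      exact_mod_cast Nat.cast_le.2 ((Finset.card_le_card hsub).trans hB0u)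
    -- the key finset C
    set C : Finset X := Finset.univ.filter (fun v : X => dist z v ≤ R1 ∧ R0 < dist u v)
      with hC
    have hB1 : (Finset.univ.filter (fun v : X => dist z v ≤ R1)).card = N1 := by
      rw [hN1, Set.ncard_eq_toFinset_card']
      congr 1
      ext v; simp
    have hCcard : (N1 : ℝ) - (N0 : ℝ) ≤ (C.card : ℝ) := by
      have hsub : (Finset.univ.filter (fun v : X => dist z v ≤ R1))
          ⊆ C ∪ Finset.univ.filter (fun v : X => dist u v ≤ R0) := by
        intro v hv
        simp only [Finset.mem_filter, Finset.mem_univ, true_and, Finset.mem_union,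
          hC] at hv ⊢
        by_cases h : dist u v ≤ R0
        · exact Or.inr h
        · exact Or.inl ⟨hv, lt_of_not_ge h⟩
      have h1 : N1 ≤ C.card + (Finset.univ.filter (fun v : X => dist u v ≤ R0)).card := by
        rw [← hB1]
        exact (Finset.card_le_card hsub).trans (Finset.card_union_le _ _)
      have h2 : N1 ≤ C.card + N0 := h1.trans (by omega)
      have h3' := (Nat.cast_le (α := ℝ)).2 h2
      push_cast at h3'
      linarith
    -- lower bound the sum
    have hsum : (C.card : ℝ) * (R0 / R) ≤ ∑ v : X, (if dist u v ≤ 2 * R then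
        (dist u v / R) * (if dist z u ≤ R1 ∨ dist z v ≤ R1 then 1 else 0) else 0) := by
      calc (C.card : ℝ) * (R0 / R) = ∑ _v ∈ C, R0 / R := by
            rw [Finset.sum_const, nsmul_eq_mul]
        _ ≤ ∑ v ∈ C, (if dist u v ≤ 2 * R then
            (dist u v / R) * (if dist z u ≤ R1 ∨ dist z v ≤ R1 then 1 else 0) else 0) := by
            apply Finset.sum_le_sum
            intro v hv
            simp only [hC, Finset.mem_filter, Finset.mem_univ, true_and] at hv
            obtain ⟨hv1, hv2⟩ := hv
            have hduv : dist u v ≤ 2 * R := by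
              have := dist_triangle u z v
              rw [dist_comm u z] at this
              linarith
            rw [if_pos hduv, if_pos (Or.inr hv1), mul_one]
            gcongr
        _ ≤ ∑ v : X, (if dist u v ≤ 2 * R then
            (dist u v / R) * (if dist z u ≤ R1 ∨ dist z v ≤ R1 then 1 else 0) else 0) :=
            Finset.sum_le_sum_of_subset_of_nonneg (Finset.subset_univ _)
              (fun v _ _ => hterm_nonneg v)
    -- combine everything
    have hN0nn : (0:ℝ) ≤ (N0:ℝ) := Nat.cast_nonneg _
    have hheavy' : (1 / β) ^ (q + 1) * (N0 : ℝ) ≤ (N1 : ℝ) := hheavy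
    have hkey : (N0 : ℝ) ≤ 2 * β ^ (q + 1) * ((N1 : ℝ) - (N0 : ℝ)) := by
      have h1 : β ^ (q + 1) * ((1 / β) ^ (q + 1) * (N0:ℝ)) ≤ β ^ (q + 1) * (N1:ℝ) :=
        mul_le_mul_of_nonneg_left hheavy' hbpos.le
      have h2 : β ^ (q + 1) * ((1 / β) ^ (q + 1) * (N0:ℝ)) = (N0:ℝ) := by
        rw [← mul_assoc, hinv, one_mul]
      nlinarith
    have hfac : (0:ℝ) ≤ 2 * Dβ * β ^ (q + 1) := by positivity
    calc (∑ v : X, if dist u v ≤ r ∧ Xor' (dist z u ≤ R1) (dist z v ≤ R1)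
        then (1 : ℝ) else 0) ≤ (N0 : ℝ) := hLHS
      _ ≤ 2 * β ^ (q + 1) * ((N1 : ℝ) - (N0 : ℝ)) := hkey
      _ ≤ 2 * β ^ (q + 1) * (C.card : ℝ) :=
          mul_le_mul_of_nonneg_left hCcard (by positivity)
      _ = 2 * Dβ * β ^ (q + 1) * ((C.card : ℝ) * (R0 / R)) := by
          have hDiv : Dβ * (R0 / R) = 1 := by
            field_simp
            linarith [hDR0]
          calc 2 * β ^ (q + 1) * (C.card : ℝ)
              = 2 * β ^ (q + 1) * (C.card : ℝ) * (Dβ * (R0 / R)) := by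
                rw [hDiv, mul_one]
            _ = 2 * Dβ * β ^ (q + 1) * ((C.card : ℝ) * (R0 / R)) := by ring
      _ ≤ 2 * Dβ * β ^ (q + 1) * ∑ v : X, (if dist u v ≤ 2 * R then
            (dist u v / R) * (if dist z u ≤ R1 ∨ dist z v ≤ R1 then 1 else 0) else 0) :=
          mul_le_mul_of_nonneg_left hsum hfac
  · -- trivial case: LHS = 0
    have hL : (∑ v : X, if dist u v ≤ r ∧ Xor' (dist z u ≤ R1) (dist z v ≤ R1)
        then (1 : ℝ) else 0) = 0 := by
      apply Finset.sum_eq_zero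
      intro v _
      rw [if_neg]
      exact fun h => hex ⟨v, h⟩
    rw [hL]
    have : (0:ℝ) ≤ ∑ v : X, (if dist u v ≤ 2 * R then
        (dist u v / R) * (if dist z u ≤ R1 ∨ dist z v ≤ R1 then 1 else 0) else 0) :=
      Finset.sum_nonneg fun v _ => hterm_nonneg v
    positivity
end

section
/- Let α ∈ (0,1] and n ≥ 3, and consider the Correlation Clustering instance on vertices v_0, …, v_{n−1} in which the path edges (v_i, v_{i+1}) for 0 ≤ i ≤ n−2 are positive with weight 1, the edge (v_0, v_{n−1}) is negative with weight 1, and every other pair is a positive edge of weight α. Then for every partition 𝒫 of the vertex set there exists a vertex u with dis_u(𝒫) ≥ 1; consequently, for every p ≥ 1, ‖dis(𝒫)‖_p ≥ 1. -/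
open scoped Classical

/-- The negative edges of the integrality-gap instance: the single edge `{v₀, v_{n−1}}`. -/
def pathNeg (n : ℕ) (i j : Fin n) : Prop :=
  (i.val = 0 ∧ j.val = n - 1) ∨ (j.val = 0 ∧ i.val = n - 1)

/-- Edge weights of the integrality-gap instance: path edges `(v_i, v_{i+1})` have weight 1,
the edge `{v₀, v_{n−1}}` has weight 1, and all other pairs have weight `α`. -/
noncomputable def pathW (α : ℝ) (n : ℕ) (i j : Fin n) : ℝ :=
  if i.val + 1 = j.val ∨ j.val + 1 = i.val then 1
  else if pathNeg n i j then 1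
  else α

/-- The weight of disagreements at vertex `u` for the clustering given by labels `c`:
positive edges (`¬ neg u v`) disagree when endpoints get different labels,
negative edges (`neg u v`) disagree when endpoints get the same label. -/
noncomputable def disagree {V : Type} [Fintype V] (w : V → V → ℝ) (neg : V → V → Prop)
    (c : V → ℕ) (u : V) : ℝ :=
  ∑ v : V, if v = u then 0 else
    if neg u v then w u v * (if c u = c v then 1 else 0)
    else w u v * (if c u = c v then 0 else 1)

/-- For `α ∈ (0,1]` and `n ≥ 3`, in the integrality-gap instance on
`v₀, …, v_{n−1}` (path edges positive with weight 1, edge `(v₀,v_{n−1})` negative with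
weight 1, all other pairs positive with weight `α`), every partition `c` has a vertex `u`
with `dis_u ≥ 1`; consequently `‖dis‖_p ≥ 1` for every `p ≥ 1`. -/
theorem stmt15 (α : ℝ) (hα : α ∈ Set.Ioc (0 : ℝ) 1) (n : ℕ) (hn : 3 ≤ n)
    (c : Fin n → ℕ) :
    (∃ u : Fin n, 1 ≤ disagree (pathW α n) (pathNeg n) c u) ∧
      ∀ p : ℝ, 1 ≤ p →
        1 ≤ (∑ u : Fin n, disagree (pathW α n) (pathNeg n) c u ^ p) ^ (1 / p) := by
  obtain ⟨hα0, hα1⟩ := hα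
  have hn0 : 0 < n := by omega
  have hw : ∀ i j : Fin n, 0 ≤ pathW α n i j := by
    intro i j
    unfold pathW
    split_ifs <;> norm_num <;> linarith
  have key : ∃ u : Fin n, 1 ≤ disagree (pathW α n) (pathNeg n) c u := by
    by_cases hconst : ∀ k : ℕ, (h : k + 1 < n) → c ⟨k, by omega⟩ = c ⟨k+1, h⟩
    · have hall : ∀ m : ℕ, (hm : m < n) → c ⟨0, hn0⟩ = c ⟨m, hm⟩ := by
        intro m
        induction m with
        | zero => intro _; rfl
        | succ k ih => intro hm; rw [ih (by omega)]; exact hconst k hm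
      refine ⟨⟨0, hn0⟩, ?_⟩
      set u : Fin n := ⟨0, hn0⟩ with hu
      set v : Fin n := ⟨n-1, by omega⟩ with hv
      unfold disagree
      refine le_trans ?_ (Finset.single_le_sum (fun x _ => ?_) (Finset.mem_univ v))
      · have hne : v ≠ u := by simp [hu, hv, Fin.ext_iff]; omega
        have hnegv : pathNeg n u v := Or.inl ⟨rfl, rfl⟩
        have hwv : pathW α n u v = 1 := by
          unfold pathW
          have h1 : ¬(u.val + 1 = v.val ∨ v.val + 1 = u.val) := by
            simp [hu, hv]; omega
          rw [if_neg h1, if_pos hnegv]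
        have hcv : c u = c v := hall (n-1) (by omega)
        rw [if_neg hne, if_pos hnegv, hwv, if_pos hcv]
        norm_num
      · have := hw u x
        split_ifs <;> simp <;> linarith
    · push_neg at hconst
      obtain ⟨k, hk, hck⟩ := hconst
      refine ⟨⟨k, by omega⟩, ?_⟩
      set u : Fin n := ⟨k, by omega⟩ with hu
      set v : Fin n := ⟨k+1, hk⟩ with hv
      unfold disagree
      refine le_trans ?_ (Finset.single_le_sum (fun x _ => ?_) (Finset.mem_univ v))
      · have hne : v ≠ u := by simp [hu, hv, Fin.ext_iff]
        have hnegv : ¬ pathNeg n u v := by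
          unfold pathNeg
          simp only [hu, hv]
          push_neg
          constructor <;> intro h <;> omega
        have hwv : pathW α n u v = 1 := by
          unfold pathW
          rw [if_pos (Or.inl rfl)]
        have hcv : ¬ (c u = c v) := hck
        rw [if_neg hne, if_neg hnegv, hwv, if_neg hcv]
        norm_num
      · have := hw u x
        split_ifs <;> simp <;> linarith
  obtain ⟨u0, hu0⟩ := key
  have hdis_nonneg : ∀ u : Fin n, 0 ≤ disagree (pathW α n) (pathNeg n) c u := by
    intro u
    unfold disagree
    refine Finset.sum_nonneg (fun x _ => ?_)
    have := hw u x
    split_ifs <;> simp <;> linarith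
  refine ⟨⟨u0, hu0⟩, fun p hp => ?_⟩
  have hp0 : 0 < p := by linarith
  have h1 : 1 ≤ disagree (pathW α n) (pathNeg n) c u0 ^ p := by
    calc (1:ℝ) = 1 ^ p := (Real.one_rpow p).symm
    _ ≤ _ := Real.rpow_le_rpow (by norm_num) hu0 hp0.le
  have h2 : 1 ≤ ∑ u : Fin n, disagree (pathW α n) (pathNeg n) c u ^ p :=
    h1.trans (Finset.single_le_sum
      (fun x _ => Real.rpow_nonneg (hdis_nonneg x) p) (Finset.mem_univ u0))
  calc (1:ℝ) = 1 ^ (1/p) := (Real.one_rpow _).symm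
  _ ≤ _ := Real.rpow_le_rpow (by norm_num) h2 (by positivity)
end

section
/- There exists an absolute constant C > 0 such that the following holds. Let α ∈ (0,1] and n = 1 + ⌈√(1/α)⌉, and consider the Correlation Clustering instance on vertices v_0, …, v_{n−1} in which the path edges (v_i, v_{i+1}) for 0 ≤ i ≤ n−2 are positive with weight 1, the edge (v_0, v_{n−1}) is negative with weight 1, and every other pair is a positive edge of weight α. Then the assignment x_{v_i v_j} = |i − j|/(n − 1) is a feasible CP solution (it is symmetric, takes values in [0,1], vanishes on the diagonal, and satisfies the triangle inequality), its cost vector satisfies y_u ≤ 2/(n−1) + α·n for every vertex u, and for every p ≥ 1, ‖y‖_p ≤ C·α^{1/2 − 1/(2p)}. -/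
open scoped Classical

/-- The CP cost `y_u` of vertex `u` for the fractional solution `x`. -/
noncomputable def cpCost {V : Type} [Fintype V] (w : V → V → ℝ) (neg : V → V → Prop)
    (x : V → V → ℝ) (u : V) : ℝ :=
  ∑ v : V, if v = u then 0 else
    if neg u v then w u v * (1 - x u v) else w u v * x u v

/-- Feasibility of a CP solution: symmetric, zero on the diagonal, values in `[0,1]`,
and satisfying the triangle inequality. -/
def CPFeasible {V : Type} (x : V → V → ℝ) : Prop :=
  (∀ u v, x u v = x v u) ∧ (∀ u, x u u = 0) ∧ (∀ u v, 0 ≤ x u v ∧ x u v ≤ 1) ∧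
    (∀ u v t, x u t ≤ x u v + x v t)

/-!
Along the path every edge is stretched to length `1/(n-1)` and the negative edge to `1`, so each
vertex pays at most `2/(n-1)` for its two path edges, nothing for the negative edge, and at most `α`
for each of the other `n` pairs. With `s = √(1/α)`, the choice `n - 1 = ⌈s⌉` gives `s ≤ n - 1` and
`n ≤ 3s`, hence every `y_u ≤ 5/s = 5√α`, and `‖y‖_p ≤ n^{1/p} · max_u y_u ≤ 15 s^{1/p}/s`,
which is `15 α^{1/2 - 1/(2p)}`.
-/

open Finset

lemma sum_ite_const_le_of_subsingleton {ι M : Type*} [Fintype ι] [AddCommMonoid M]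
    [PartialOrder M] [IsOrderedAddMonoid M] {P : ι → Prop} [DecidablePred P] {c : M}
    (hc : 0 ≤ c) (hP : {i | P i}.Subsingleton) : ∑ i, (if P i then c else 0) ≤ c := by
  rw [← sum_filter, sum_const]
  calc _ ≤ 1 • c := nsmul_le_nsmul_left hc <| card_le_one.mpr fun a ha b hb =>
          hP (mem_filter.mp ha).2 (mem_filter.mp hb).2
    _ = c := one_nsmul c

lemma sum_rpow_rpow_one_div_le_card_rpow_mul {ι : Type*} [Fintype ι] {y : ι → ℝ} {B p : ℝ}
    (hy : ∀ i, 0 ≤ y i) (hyB : ∀ i, y i ≤ B) (hB : 0 ≤ B) (hp : 0 < p) :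
    (∑ i, y i ^ p) ^ (1 / p) ≤ (Fintype.card ι : ℝ) ^ (1 / p) * B := by
  calc (∑ i, y i ^ p) ^ (1 / p) ≤ (∑ _i : ι, B ^ p) ^ (1 / p) :=
        Real.rpow_le_rpow (sum_nonneg fun i _ => Real.rpow_nonneg (hy i) p)
          (sum_le_sum fun i _ => Real.rpow_le_rpow (hy i) (hyB i) hp.le) (by positivity)
    _ = (Fintype.card ι : ℝ) ^ (1 / p) * B := by
        rw [sum_const, nsmul_eq_mul, card_univ, Real.mul_rpow (by positivity) (by positivity),
          one_div, Real.rpow_rpow_inv hB hp.ne']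

lemma cpCost_nonneg {V : Type} [Fintype V] {w : V → V → ℝ} {neg : V → V → Prop}
    {x : V → V → ℝ} (hw : ∀ u v, 0 ≤ w u v) (hx : ∀ u v, 0 ≤ x u v ∧ x u v ≤ 1) (u : V) :
    0 ≤ cpCost w neg x u := by
  refine sum_nonneg fun v _ => ?_
  split_ifs
  · exact le_rfl
  · exact mul_nonneg (hw u v) (sub_nonneg.mpr (hx u v).2)
  · exact mul_nonneg (hw u v) (hx u v).1

lemma pathW_nonneg {α : ℝ} (hα : 0 ≤ α) (n : ℕ) (i j : Fin n) : 0 ≤ pathW α n i j := by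
  unfold pathW
  split_ifs <;> linarith

noncomputable def pathMetric (n : ℕ) (i j : Fin n) : ℝ :=
  |(i.val : ℝ) - (j.val : ℝ)| / ((n : ℝ) - 1)

section pathMetric

variable {n : ℕ}

lemma val_le_natCast_sub_one (i : Fin n) : (i.val : ℝ) ≤ (n : ℝ) - 1 := by
  have : ((i.val + 1 : ℕ) : ℝ) ≤ n := by exact_mod_cast i.isLt
  push_cast at this
  linarith

lemma natCast_sub_one_nonneg (i : Fin n) : 0 ≤ (n : ℝ) - 1 :=
  (Nat.cast_nonneg i.val).trans (val_le_natCast_sub_one i)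

lemma pathMetric_nonneg (i j : Fin n) : 0 ≤ pathMetric n i j :=
  div_nonneg (abs_nonneg _) (natCast_sub_one_nonneg i)

lemma pathMetric_le_one (i j : Fin n) : pathMetric n i j ≤ 1 := by
  have hi := val_le_natCast_sub_one i
  have hj := val_le_natCast_sub_one j
  refine div_le_one_of_le₀ (abs_sub_le_iff.mpr ⟨?_, ?_⟩) (natCast_sub_one_nonneg i) <;>
    linarith [Nat.cast_nonneg (α := ℝ) i.val, Nat.cast_nonneg (α := ℝ) j.val]

lemma cpFeasible_pathMetric (n : ℕ) : CPFeasible (pathMetric n) := by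
  refine ⟨fun u v => ?_, fun u => by simp [pathMetric],
    fun u v => ⟨pathMetric_nonneg u v, pathMetric_le_one u v⟩, fun u v t => ?_⟩
  · rw [pathMetric, pathMetric, abs_sub_comm]
  · rw [pathMetric, pathMetric, pathMetric, ← add_div]
    exact div_le_div_of_nonneg_right (abs_sub_le _ _ _) (natCast_sub_one_nonneg u)

lemma pathMetric_of_pathNeg (hn : 2 ≤ n) {i j : Fin n} (h : pathNeg n i j) :
    pathMetric n i j = 1 := by
  have hn1 : ((n - 1 : ℕ) : ℝ) = (n : ℝ) - 1 := by
    push_cast [Nat.cast_sub (by omega : 1 ≤ n)]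
    ring
  have hd : (0 : ℝ) < (n : ℝ) - 1 := by
    have : (2 : ℝ) ≤ n := by exact_mod_cast hn
    linarith
  rcases h with ⟨hi, hj⟩ | ⟨hj, hi⟩ <;>
    simp only [pathMetric, hi, hj, hn1, Nat.cast_zero, zero_sub, sub_zero, abs_neg,
      abs_of_pos hd, div_self hd.ne']

lemma pathMetric_of_val_add_one_eq {i j : Fin n} (h : i.val + 1 = j.val ∨ j.val + 1 = i.val) :
    pathMetric n i j = 1 / ((n : ℝ) - 1) := by
  rcases h with h | h <;>
  · rw [pathMetric, ← h]
    push_cast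
    norm_num

end pathMetric

lemma cpCost_pathW_pathMetric_le {α : ℝ} (hα : 0 ≤ α) {n : ℕ} (hn : 2 ≤ n) (u : Fin n) :
    cpCost (pathW α n) (pathNeg n) (pathMetric n) u ≤ 2 / ((n : ℝ) - 1) + α * n := by
  set d := 1 / ((n : ℝ) - 1) with hd_def
  have hd : 0 ≤ d := one_div_nonneg.mpr (by linarith [(Nat.ofNat_le_cast (α := ℝ)).mpr hn])
  have hval : ∀ k : ℕ, {v : Fin n | v.val = k}.Subsingleton := fun k a ha b hb =>
    Fin.ext (ha.trans hb.symm)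
  -- `0 < u.val` excludes the truncated `0 - 1 = 0`: the vertex `v₀` has no predecessor.
  calc cpCost (pathW α n) (pathNeg n) (pathMetric n) u
      ≤ ∑ v : Fin n, ((if v.val = u.val - 1 ∧ 0 < u.val then d else 0) +
          (if v.val = u.val + 1 then d else 0) + α) := by
        refine sum_le_sum fun v _ => ?_
        have hpred : 0 ≤ (if v.val = u.val - 1 ∧ 0 < u.val then d else 0) := ite_nonneg hd le_rfl
        have hsucc : 0 ≤ (if v.val = u.val + 1 then d else 0) := ite_nonneg hd le_rfl
        by_cases hvu : v = u
        · subst hvu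
          simp only [if_true]
          linarith
        by_cases hneg : pathNeg n u v
        · simp only [hvu, hneg, pathMetric_of_pathNeg hn hneg, if_true, if_false, sub_self,
            mul_zero]
          linarith
        by_cases hadj : u.val + 1 = v.val ∨ v.val + 1 = u.val
        · simp only [hvu, hneg, pathW, hadj, pathMetric_of_val_add_one_eq hadj, ← hd_def, if_true,
            if_false, one_mul]
          rcases hadj with h | h
          · simp only [← h, if_true] at hpred ⊢
            linarith
          · simp only [← h, Nat.add_sub_cancel, Nat.succ_pos, and_self, if_true] at hsucc ⊢
            linarith
        · simp only [hvu, hneg, pathW, hadj, if_false]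
          nlinarith [pathMetric_le_one u v]
    _ = (∑ v : Fin n, (if v.val = u.val - 1 ∧ 0 < u.val then d else 0)) +
          (∑ v : Fin n, (if v.val = u.val + 1 then d else 0)) + n * α := by
        rw [sum_add_distrib, sum_add_distrib, sum_const, card_univ, Fintype.card_fin, nsmul_eq_mul]
    _ ≤ d + d + n * α := by
        gcongr
        · exact sum_ite_const_le_of_subsingleton hd ((hval _).anti fun v hv => hv.1)
        · exact sum_ite_const_le_of_subsingleton hd (hval _)
    _ = 2 / ((n : ℝ) - 1) + α * n := by ring

section gapEstimates

variable {α : ℝ} {n : ℕ}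

lemma sqrt_one_div_bounds (hα : α ∈ Set.Ioc 0 1) (hn : n = 1 + ⌈√(1 / α)⌉₊) :
    1 ≤ √(1 / α) ∧ √(1 / α) ≤ (n : ℝ) - 1 ∧ (n : ℝ) ≤ 3 * √(1 / α) := by
  have hs : 1 ≤ √(1 / α) := Real.one_le_sqrt.mpr ((one_le_div hα.1).mpr hα.2)
  have hn' : (n : ℝ) = ⌈√(1 / α)⌉₊ + 1 := by rw [hn]; push_cast; ring
  have hceil := Nat.ceil_lt_add_one (zero_le_one.trans hs)
  exact ⟨hs, by linarith [Nat.le_ceil √(1 / α)], by linarith⟩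

lemma costBound_le_five_div_sqrt (hα : α ∈ Set.Ioc 0 1) (hn : n = 1 + ⌈√(1 / α)⌉₊) :
    2 / ((n : ℝ) - 1) + α * n ≤ 5 / √(1 / α) := by
  obtain ⟨hs, hsn, hns⟩ := sqrt_one_div_bounds hα hn
  set s := √(1 / α)
  have hs0 : 0 < s := one_pos.trans_le hs
  have hαs : α * s ^ 2 = 1 := by
    rw [Real.sq_sqrt (one_div_nonneg.mpr hα.1.le), mul_one_div_cancel hα.1.ne']
  have hpath : 2 / ((n : ℝ) - 1) ≤ 2 / s := div_le_div_of_nonneg_left zero_le_two hs0 hsn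
  have hrest : α * n ≤ 3 / s := by
    rw [le_div_iff₀ hs0]
    nlinarith [mul_le_mul_of_nonneg_left hns (mul_nonneg hα.1.le hs0.le)]
  linarith [show 2 / s + 3 / s = 5 / s by ring]

lemma natCast_rpow_one_div_le (hα : α ∈ Set.Ioc 0 1) (hn : n = 1 + ⌈√(1 / α)⌉₊) {p : ℝ}
    (hp : 1 ≤ p) : (n : ℝ) ^ (1 / p) ≤ 3 * √(1 / α) ^ (1 / p) := by
  obtain ⟨hs, -, hns⟩ := sqrt_one_div_bounds hα hn
  have hp0 : 0 < p := one_pos.trans_le hp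
  have h3 : (3 : ℝ) ^ (1 / p) ≤ 3 := by
    simpa using Real.rpow_le_rpow_of_exponent_le (by norm_num : (1 : ℝ) ≤ 3)
      ((div_le_one hp0).mpr hp)
  calc (n : ℝ) ^ (1 / p) ≤ (3 * √(1 / α)) ^ (1 / p) :=
        Real.rpow_le_rpow (Nat.cast_nonneg n) hns (by positivity)
    _ = 3 ^ (1 / p) * √(1 / α) ^ (1 / p) := Real.mul_rpow (by norm_num) (by positivity)
    _ ≤ 3 * √(1 / α) ^ (1 / p) := by gcongr

lemma rpow_half_sub_eq_sqrt_one_div (hα : 0 < α) (p : ℝ) :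
    α ^ ((1 : ℝ) / 2 - 1 / (2 * p)) = √(1 / α) ^ (1 / p) / √(1 / α) := by
  have hs : 0 < √(1 / α) := Real.sqrt_pos.mpr (one_div_pos.mpr hα)
  have hsqrt : α ^ ((1 : ℝ) / 2) = (√(1 / α))⁻¹ := by
    rw [← Real.sqrt_eq_rpow, one_div, Real.sqrt_inv, inv_inv]
  calc α ^ ((1 : ℝ) / 2 - 1 / (2 * p)) = (α ^ ((1 : ℝ) / 2)) ^ (-(1 / p - 1)) := by
        rw [← Real.rpow_mul hα.le]
        ring_nf
    _ = √(1 / α) ^ (1 / p) / √(1 / α) := by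
        rw [hsqrt, Real.inv_rpow hs.le, ← Real.rpow_neg hs.le, neg_neg, Real.rpow_sub_one hs.ne']

end gapEstimates

/-- There is an absolute constant `C > 0` such that for every
`α ∈ (0,1]`, with `n = 1 + ⌈√(1/α)⌉`, in the integrality-gap instance on `v₀, …, v_{n−1}`
the assignment `x_{ij} = |i − j|/(n − 1)` is a feasible CP solution, its cost vector
satisfies `y_u ≤ 2/(n−1) + α n` for every `u`, and `‖y‖_p ≤ C α^{1/2 − 1/(2p)}`
for every `p ≥ 1`. -/
theorem stmt16 :
    ∃ C : ℝ, 0 < C ∧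
      ∀ α : ℝ, α ∈ Set.Ioc (0 : ℝ) 1 →
      ∀ n : ℕ, n = 1 + ⌈Real.sqrt (1 / α)⌉₊ →
      ∀ x : Fin n → Fin n → ℝ,
        (∀ i j : Fin n, x i j = |(i.val : ℝ) - (j.val : ℝ)| / ((n : ℝ) - 1)) →
        CPFeasible x ∧
        (∀ u : Fin n, cpCost (pathW α n) (pathNeg n) x u ≤ 2 / ((n : ℝ) - 1) + α * n) ∧
        ∀ p : ℝ, 1 ≤ p →
          (∑ u : Fin n, cpCost (pathW α n) (pathNeg n) x u ^ p) ^ (1 / p)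
            ≤ C * α ^ ((1 : ℝ) / 2 - 1 / (2 * p)) := by
  refine ⟨15, by norm_num, fun α hα n hn x hx => ?_⟩
  obtain rfl : x = pathMetric n := funext₂ hx
  have hn2 : 2 ≤ n := by
    have := Nat.one_le_ceil_iff.mpr (Real.sqrt_pos.mpr (one_div_pos.mpr hα.1))
    omega
  have hfeas := cpFeasible_pathMetric n
  have hcost := cpCost_pathW_pathMetric_le hα.1.le hn2
  refine ⟨hfeas, hcost, fun p hp => ?_⟩
  have hcost_nonneg := cpCost_nonneg (neg := pathNeg n) (pathW_nonneg hα.1.le n) hfeas.2.2.1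
  have hbound_nonneg := (hcost_nonneg ⟨0, by omega⟩).trans (hcost _)
  calc (∑ u : Fin n, cpCost (pathW α n) (pathNeg n) (pathMetric n) u ^ p) ^ (1 / p)
      ≤ (n : ℝ) ^ (1 / p) * (2 / ((n : ℝ) - 1) + α * n) := by
        simpa using sum_rpow_rpow_one_div_le_card_rpow_mul hcost_nonneg hcost
          hbound_nonneg (one_pos.trans_le hp)
    _ ≤ (3 * √(1 / α) ^ (1 / p)) * (5 / √(1 / α)) :=
        mul_le_mul (natCast_rpow_one_div_le hα hn hp) (costBound_le_five_div_sqrt hα hn)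
          hbound_nonneg (by positivity)
    _ = 15 * α ^ ((1 : ℝ) / 2 - 1 / (2 * p)) := by
        rw [rpow_half_sub_eq_sqrt_one_div hα.1]
        ring
end
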